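/- arXiv:2506.13451 — 11 statements merged into one kernel-verified Lean document; each statement's English description precedes it below -/
import Mathlib

section
/- Let n ≥ k ≥ 2 be integers and let P be a set of n points in a real inner product space, with D = diam P. Then there exist a partition of P into k nonempty subsets P_1, …, P_k and a point c such that for every i ∈ {1,…,k} the closed ball of radius (2 + √2)·√(k/n)·D centered at c intersects the convex hull of P_i. -/
/-!
Split `P` into `k` parts of sizes at least `m = ⌊n/k⌋` and, among all partitions with these part
sizes, take one minimising `∑ₗ ‖sₗ‖² / |Pₗ|`, where `sₗ` is the sum of the points of `Pₗ`.
Swapping `u ∈ Pᵢ` with `v ∈ Pⱼ` cannot decrease this energy, which bounds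
`2⟪cⱼ - cᵢ, v - u⟫` by `D² (1/|Pᵢ| + 1/|Pⱼ|)` for the barycentres `cₗ`; averaging over `u` and `v`
turns the left side into `2‖cⱼ - cᵢ‖²`. Hence all barycentres lie within `D/√m ≤ √(2k/n)·D` of
each other, and the barycentre of any one part serves as `c`.
-/

open Finset Equiv RealInnerProductSpace

section Barycenter

variable {ι E : Type*} [NormedAddCommGroup E] [InnerProductSpace ℝ E]

noncomputable def barycenter (s : Finset ι) (p : ι → E) : E :=
  (#s : ℝ)⁻¹ • ∑ a ∈ s, p a

theorem card_smul_barycenter {s : Finset ι} (hs : s.Nonempty) (p : ι → E) :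
    (#s : ℝ) • barycenter s p = ∑ a ∈ s, p a := by
  rw [barycenter, smul_inv_smul₀ (by exact_mod_cast hs.card_pos.ne')]

theorem barycenter_mem_convexHull {s : Finset ι} (hs : s.Nonempty) {p : ι → E} {A : Set E}
    (hp : ∀ a ∈ s, p a ∈ A) : barycenter s p ∈ convexHull ℝ A := by
  have h := s.centerMass_mem_convexHull (w := fun _ => (1 : ℝ)) (fun _ _ => zero_le_one)
    (by simpa using hs) hp
  simpa [Finset.centerMass, barycenter] using h

theorem norm_barycenter_sub_sq_le_of_forall_inner_le {s t : Finset ι} (hs : s.Nonempty)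
    (ht : t.Nonempty) {p : ι → E} {C : ℝ}
    (h : ∀ a ∈ s, ∀ b ∈ t, ⟪barycenter t p - barycenter s p, p b - p a⟫ ≤ C) :
    ‖barycenter t p - barycenter s p‖ ^ 2 ≤ C := by
  set w := barycenter t p - barycenter s p
  have hst : (0 : ℝ) < #s * #t := by have := hs.card_pos; have := ht.card_pos; positivity
  have hsum : ∑ a ∈ s, ∑ b ∈ t, ⟪w, p b - p a⟫ = #s * #t * ‖w‖ ^ 2 := by
    have inner_sum_eq {r : Finset ι} (hr : r.Nonempty) :
        ∑ a ∈ r, ⟪w, p a⟫ = #r * ⟪w, barycenter r p⟫ := by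
      rw [← inner_sum, ← card_smul_barycenter hr, real_inner_smul_right]
    simp only [inner_sub_right, sum_sub_distrib, sum_const, nsmul_eq_mul, ← mul_sum,
      inner_sum_eq hs, inner_sum_eq ht]
    rw [← real_inner_self_eq_norm_sq, inner_sub_right]
    ring
  have hle : ∑ a ∈ s, ∑ b ∈ t, ⟪w, p b - p a⟫ ≤ #s * #t * C := by
    simpa [mul_assoc] using sum_le_sum fun a ha => sum_le_sum fun b hb => h a ha b hb
  nlinarith

end Barycenter

section Assignment

variable {ι κ E : Type*} [Fintype ι] [DecidableEq κ] [NormedAddCommGroup E]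
  [InnerProductSpace ℝ E]

theorem card_fiber_comp_perm (σ : ι → κ) (e : Perm ι) (l : κ) :
    #{x | σ (e x) = l} = #{x | σ x = l} := by
  simp only [card_filter]
  exact Equiv.sum_comp e fun x => if σ x = l then 1 else 0

theorem sum_fiber_comp_swap {G : Type*} [AddCommGroup G] [DecidableEq ι] (p : ι → G)
    (σ : ι → κ) {a b : ι} (hab : a ≠ b) (l : κ) :
    ∑ x with σ (swap a b x) = l, p x = ∑ x with σ x = l, p x
      + ((if σ a = l then p b - p a else 0) + if σ b = l then p a - p b else 0) := by
  have reindex : ∑ x with σ (swap a b x) = l, p x = ∑ x with σ x = l, p (swap a b x) := by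
    simp only [sum_filter]
    simpa using Equiv.sum_comp (swap a b) fun x => if σ x = l then p (swap a b x) else 0
  have hdiff : ∑ x with σ x = l, (p (swap a b x) - p x) =
      (if σ a = l then p b - p a else 0) + if σ b = l then p a - p b else 0 := by
    rw [sum_filter, Fintype.sum_eq_add a b hab]
    · simp [swap_apply_left, swap_apply_right]
    · rintro x ⟨hxa, hxb⟩
      simp [swap_apply_of_ne_of_ne hxa hxb]
  rw [reindex, ← hdiff, sum_sub_distrib]
  abel

noncomputable def fiberEnergy [Fintype κ] (p : ι → E) (σ : ι → κ) : ℝ :=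
  ∑ l, ‖∑ x with σ x = l, p x‖ ^ 2 / #{x | σ x = l}

theorem fiberEnergy_comp_swap [Fintype κ] [DecidableEq ι] (p : ι → E) {σ : ι → κ} {a b : ι}
    {i j : κ} (ha : σ a = i) (hb : σ b = j) (hij : i ≠ j) :
    fiberEnergy p (σ ∘ swap a b) = fiberEnergy p σ
      + (2 * ⟪barycenter {x | σ x = i} p - barycenter {x | σ x = j} p, p b - p a⟫
        + ‖p b - p a‖ ^ 2 * ((#{x | σ x = i} : ℝ)⁻¹ + (#{x | σ x = j} : ℝ)⁻¹)) := by
  have hab : a ≠ b := fun h => hij (by rw [← ha, ← hb, h])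
  set d := p b - p a
  have hterm {l : κ} {c : ι} (hc : σ c = l) (v : E) :
      (‖∑ x with σ x = l, p x + v‖ ^ 2 - ‖∑ x with σ x = l, p x‖ ^ 2) / #{x | σ x = l} =
        2 * ⟪barycenter {x | σ x = l} p, v⟫ + ‖v‖ ^ 2 * (#{x | σ x = l} : ℝ)⁻¹ := by
    have hne : ({x | σ x = l} : Finset ι).Nonempty := ⟨c, by simpa using hc⟩
    have hpos : (0 : ℝ) < #{x | σ x = l} := by exact_mod_cast hne.card_pos
    rw [← card_smul_barycenter hne, norm_add_sq_real, real_inner_smul_left]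
    field_simp
    ring
  have hdiff : fiberEnergy p (σ ∘ swap a b) - fiberEnergy p σ = ∑ l,
      (‖∑ x with σ x = l, p x + ((if σ a = l then d else 0) + if σ b = l then -d else 0)‖ ^ 2
        - ‖∑ x with σ x = l, p x‖ ^ 2) / #{x | σ x = l} := by
    simp only [fiberEnergy, Function.comp_apply, card_fiber_comp_perm,
      sum_fiber_comp_swap p σ hab, ← sum_sub_distrib, sub_div, d, neg_sub]
  rw [← sub_eq_iff_eq_add', hdiff, Fintype.sum_eq_add i j hij]
  · simp only [ha, hb, hij, hij.symm, if_true, if_false, add_zero, zero_add]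
    rw [hterm ha, hterm hb, inner_neg_right, norm_neg, inner_sub_left]
    ring
  · rintro l ⟨hli, hlj⟩
    simp [ha, hb, Ne.symm hli, Ne.symm hlj]

theorem inner_barycenter_sub_le_of_forall_le [Fintype κ] {p : ι → E} {σ : ι → κ}
    (hmin : ∀ τ : ι → κ, (∀ l, #{x | τ x = l} = #{x | σ x = l}) →
      fiberEnergy p σ ≤ fiberEnergy p τ)
    {a b : ι} {i j : κ} (ha : σ a = i) (hb : σ b = j) (hij : i ≠ j) :
    2 * ⟪barycenter {x | σ x = j} p - barycenter {x | σ x = i} p, p b - p a⟫ ≤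
      ‖p b - p a‖ ^ 2 * ((#{x | σ x = i} : ℝ)⁻¹ + (#{x | σ x = j} : ℝ)⁻¹) := by
  classical
  have h := hmin (σ ∘ swap a b) (card_fiber_comp_perm σ _)
  rw [fiberEnergy_comp_swap p ha hb hij] at h
  rw [← neg_sub, inner_neg_left]
  linarith

theorem norm_barycenter_sub_sq_le_of_forall_le [Fintype κ] {p : ι → E} {σ : ι → κ}
    (hmin : ∀ τ : ι → κ, (∀ l, #{x | τ x = l} = #{x | σ x = l}) →
      fiberEnergy p σ ≤ fiberEnergy p τ)
    {δ : ℝ} (hδ : ∀ a b, ‖p a - p b‖ ≤ δ) {i j : κ}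
    (hi : ({x | σ x = i} : Finset ι).Nonempty) (hj : ({x | σ x = j} : Finset ι).Nonempty) :
    ‖barycenter {x | σ x = j} p - barycenter {x | σ x = i} p‖ ^ 2 ≤
      δ ^ 2 * ((#{x | σ x = i} : ℝ)⁻¹ + (#{x | σ x = j} : ℝ)⁻¹) / 2 := by
  rcases eq_or_ne i j with rfl | hij
  · obtain ⟨a, -⟩ := hi
    have := (norm_nonneg _).trans (hδ a a)
    rw [sub_self, norm_zero, zero_pow two_ne_zero]
    positivity
  refine norm_barycenter_sub_sq_le_of_forall_inner_le hi hj fun a ha b hb => ?_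
  have hswap :=
    inner_barycenter_sub_le_of_forall_le hmin (by simpa using ha) (by simpa using hb) hij
  have hd : ‖p b - p a‖ ^ 2 ≤ δ ^ 2 := pow_le_pow_left₀ (norm_nonneg _) (hδ b a) 2
  have : (0 : ℝ) ≤ (#{x | σ x = i} : ℝ)⁻¹ + (#{x | σ x = j} : ℝ)⁻¹ := by positivity
  nlinarith

theorem exists_le_card_fiber [Fintype κ] [Nonempty κ] {m : ℕ}
    (h : Fintype.card κ * m ≤ Fintype.card ι) : ∃ σ : ι → κ, ∀ l, m ≤ #{x | σ x = l} := by
  obtain ⟨e⟩ : Nonempty (κ × Fin m ↪ ι) :=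
    Function.Embedding.nonempty_of_card_le (by simpa using h)
  refine ⟨Function.extend e Prod.fst fun _ => Classical.arbitrary κ, fun l => ?_⟩
  calc m = #(univ.map ⟨fun q : Fin m => e (l, q), fun q q' h => by simpa using e.injective h⟩) :=
        by simp
    _ ≤ _ := card_le_card fun x hx => by
      obtain ⟨q, -, rfl⟩ := mem_map.1 hx
      simp only [mem_filter, mem_univ, true_and]
      exact e.injective.extend_apply Prod.fst _ (l, q)

theorem exists_forall_norm_barycenter_sub_sq_le [Fintype κ] [Nonempty κ] {m : ℕ} (hm : 0 < m)
    (h : Fintype.card κ * m ≤ Fintype.card ι) {p : ι → E} {δ : ℝ}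
    (hδ : ∀ a b, ‖p a - p b‖ ≤ δ) :
    ∃ σ : ι → κ, (∀ l, m ≤ #{x | σ x = l}) ∧
      ∀ i j, ‖barycenter {x | σ x = i} p - barycenter {x | σ x = j} p‖ ^ 2 ≤ δ ^ 2 / m := by
  classical
  obtain ⟨σ₀, hσ₀⟩ := exists_le_card_fiber h
  obtain ⟨σ, hσ, hmin⟩ := exists_min_image {τ : ι → κ | ∀ l, #{x | τ x = l} = #{x | σ₀ x = l}}
    (fiberEnergy p) ⟨σ₀, by simp⟩
  simp only [mem_filter, mem_univ, true_and] at hσ hmin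
  have hcard l : m ≤ #{x | σ x = l} := hσ l ▸ hσ₀ l
  refine ⟨σ, hcard, fun i j => ?_⟩
  have hne l : ({x | σ x = l} : Finset ι).Nonempty := card_pos.1 (hm.trans_le (hcard l))
  calc ‖barycenter {x | σ x = i} p - barycenter {x | σ x = j} p‖ ^ 2
      ≤ δ ^ 2 * ((#{x | σ x = j} : ℝ)⁻¹ + (#{x | σ x = i} : ℝ)⁻¹) / 2 :=
        norm_barycenter_sub_sq_le_of_forall_le (fun τ hτ => hmin τ fun l => (hτ l).trans (hσ l))
          hδ (hne j) (hne i)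
    _ ≤ δ ^ 2 * ((m : ℝ)⁻¹ + (m : ℝ)⁻¹) / 2 := by gcongr <;> exact hcard _
    _ = δ ^ 2 / m := by ring

end Assignment

theorem inv_cast_div_le_two_mul_div {n k : ℕ} (hk : 0 < k) (hkn : k ≤ n) :
    ((n / k : ℕ) : ℝ)⁻¹ ≤ 2 * (k / n) := by
  have hm : 0 < n / k := Nat.div_pos hkn hk
  have h : n ≤ 2 * k * (n / k) := by nlinarith [Nat.lt_mul_div_succ n hk]
  have hR : (n : ℝ) ≤ (n / k : ℕ) * (2 * k) := by exact_mod_cast h.trans_eq (by ring)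
  have hn : (0 : ℝ) < n := by exact_mod_cast hk.trans_le hkn
  rw [mul_div_assoc', le_div_iff₀ hn, inv_mul_le_iff₀ (by positivity)]
  exact hR

theorem sq_div_cast_div_le_sq {n k : ℕ} (hk : 0 < k) (hkn : k ≤ n) (D : ℝ) :
    D ^ 2 / (n / k : ℕ) ≤ ((2 + √2) * √(k / n) * D) ^ 2 := by
  have hk_div_n : (0 : ℝ) ≤ k / n := by positivity
  have h2 : (2 : ℝ) ≤ (2 + √2) ^ 2 := by nlinarith [Real.sqrt_nonneg 2]
  calc D ^ 2 / (n / k : ℕ) ≤ D ^ 2 * (2 * (k / n)) := by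
        rw [div_eq_mul_inv]
        gcongr
        exact inv_cast_div_le_two_mul_div hk hkn
    _ ≤ (2 + √2) ^ 2 * (k / n) * D ^ 2 := by
        nlinarith [mul_le_mul_of_nonneg_right h2 (mul_nonneg hk_div_n (sq_nonneg D))]
    _ = ((2 + √2) * √(k / n) * D) ^ 2 := by rw [mul_pow, mul_pow, Real.sq_sqrt hk_div_n]

/-- **No-dimensional Tverberg theorem** (Adiprasito, Bárány, Mustafa).
For integers `n ≥ k ≥ 2` and an `n`-point set `P` of diameter `D` in a real inner
product space, there exist a partition of `P` into `k` nonempty subsets and a point `c`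
such that the closed ball of radius `(2 + √2)·√(k/n)·D` centered at `c` intersects the
convex hull of every part. -/
theorem no_dimensional_tverberg
    {E : Type*} [NormedAddCommGroup E] [InnerProductSpace ℝ E] [DecidableEq E]
    (n k : ℕ) (hk : 2 ≤ k) (hkn : k ≤ n)
    (P : Finset E) (hP : P.card = n) :
    ∃ Pparts : Fin k → Finset E,
      (∀ i, (Pparts i).Nonempty) ∧
      (∀ i i', i ≠ i' → Disjoint (Pparts i) (Pparts i')) ∧
      Finset.univ.biUnion Pparts = P ∧
      ∃ c : E, ∀ i, ∃ p ∈ convexHull ℝ (↑(Pparts i) : Set E),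
        dist p c ≤ (2 + Real.sqrt 2) * Real.sqrt ((k : ℝ) / (n : ℝ))
          * Metric.diam (↑P : Set E) := by
  have hk0 : 0 < k := by omega
  have hm : 0 < n / k := Nat.div_pos hkn hk0
  have : NeZero k := ⟨hk0.ne'⟩
  obtain ⟨σ, hcard, hclose⟩ := exists_forall_norm_barycenter_sub_sq_le (κ := Fin k) hm
    (by simpa [hP, mul_comm] using Nat.div_mul_le_self n k) (p := ((↑) : P → E))
    fun a b => dist_eq_norm a.1 b.1 ▸ Metric.dist_le_diam_of_mem P.finite_toSet.isBounded a.2 b.2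
  have hne i : ({x | σ x = i} : Finset P).Nonempty := card_pos.1 (hm.trans_le (hcard i))
  refine ⟨fun i => ({x | σ x = i} : Finset P).map (Function.Embedding.subtype _),
    fun i => map_nonempty.2 (hne i), fun i i' hii' => ?_, ?_, barycenter {x | σ x = 0} (↑),
    fun i => ⟨_, barycenter_mem_convexHull (hne i) fun a ha => mem_map_of_mem _ ha, ?_⟩⟩
  · rw [disjoint_map]
    exact disjoint_filter.2 fun x _ hi hi' => hii' (hi ▸ hi')
  · ext x
    simp
  · have hR : 0 ≤ (2 + √2) * √(k / n) * Metric.diam (↑P : Set E) := by positivity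
    rw [dist_eq_norm, ← pow_le_pow_iff_left₀ (norm_nonneg _) hR two_ne_zero]
    exact (hclose i 0).trans (sq_div_cast_div_le_sq hk0 hkn _)
end

section
/- Let k ≥ 2 and r ≥ 1 be integers and let Q_1, …, Q_r be pairwise disjoint sets in a real inner product space, each of size k. Then there exist a partition {P_1, …, P_k} of the union P = Q_1 ∪ ⋯ ∪ Q_r with |P_i ∩ Q_j| = 1 for all i ∈ {1,…,k} and j ∈ {1,…,r}, and a point c such that for every i the closed ball of radius ((1 + √2)/√r)·max_{j ∈ [r]} diam Q_j centered at c intersects the convex hull of P_i. -/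
/-!
Centre each colour class `Q j` at its mean `m j` and, among all transversal partitions, take one
minimising `∑ ℓ ‖S ℓ‖²`, where `S ℓ = ∑ j (p ℓ j - m j)` and `p ℓ j` is the point of colour `j`
in part `ℓ`. Exchanging the colour-`j` points of parts `i` and `ℓ` cannot decrease this energy,
which gives `⟪S ℓ - S i, p ℓ j - p i j⟫ ≤ ‖p ℓ j - p i j‖² ≤ D²`; summing over the colours,
`‖S ℓ - S i‖² ≤ r D²`. As `∑ i S i = 0`, `k ‖S ℓ‖² ≤ ∑ i ‖S ℓ - S i‖² ≤ k r D²`, so the centroid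
`S ℓ / r + c` of every part lies within `D / √r` of the mean `c` of all the points.
-/

open Finset
open scoped RealInnerProductSpace

theorem card_mul_norm_sq_le_sum_norm_sub_sq {E ι : Type*} [NormedAddCommGroup E]
    [InnerProductSpace ℝ E] [Fintype ι] (v : ι → E) (hv : ∑ i, v i = 0) (ℓ : ι) :
    Fintype.card ι * ‖v ℓ‖ ^ 2 ≤ ∑ i, ‖v ℓ - v i‖ ^ 2 := by
  have hexpand : ∑ i, ‖v ℓ - v i‖ ^ 2
      = Fintype.card ι * ‖v ℓ‖ ^ 2 - 2 * ⟪v ℓ, ∑ i, v i⟫ + ∑ i, ‖v i‖ ^ 2 := by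
    simp only [norm_sub_sq_real, sum_add_distrib, sum_sub_distrib, inner_sum, mul_sum,
      sum_const, card_univ, nsmul_eq_mul]
  rw [hexpand, hv, inner_zero_right]
  linarith [sum_nonneg fun i (_ : i ∈ univ) => sq_nonneg ‖v i‖]

section TransversalSum

variable {E ι κ : Type*} [Fintype κ]

/-- For `g j` the points of colour `j` centred at their mean, this is `r` times the vector from the
mean of all points to the centroid of the `ℓ`-th part of the partition given by `σ`. -/
def transversalSum [AddCommMonoid E] (g : κ → ι → E) (σ : κ → Equiv.Perm ι) (ℓ : ι) : E :=
  ∑ j, g j (σ j ℓ)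

section AddCommGroup

variable [AddCommGroup E] {g : κ → ι → E}

theorem sum_transversalSum_eq_zero [Fintype ι] (hg : ∀ j, ∑ i, g j i = 0) (σ : κ → Equiv.Perm ι) :
    ∑ ℓ, transversalSum g σ ℓ = 0 := by
  simp only [transversalSum]
  rw [Finset.sum_comm]
  exact sum_eq_zero fun j _ => (Equiv.sum_comp (σ j) (g j)).trans (hg j)

theorem transversalSum_update [DecidableEq κ] (σ : κ → Equiv.Perm ι) (j : κ)
    (π : Equiv.Perm ι) (i : ι) :
    transversalSum g (Function.update σ j π) i
      = transversalSum g σ i + (g j (π i) - g j (σ j i)) := by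
  rw [← sub_eq_iff_eq_add', transversalSum, transversalSum, ← sum_sub_distrib,
    sum_eq_single j (fun j' _ hj' => by simp [Function.update_of_ne hj']) (by simp)]
  simp

theorem transversalSum_sub_transversalSum (σ : κ → Equiv.Perm ι) (ℓ i : ι) :
    transversalSum g σ ℓ - transversalSum g σ i = ∑ j, (g j (σ j ℓ) - g j (σ j i)) :=
  (sum_sub_distrib _ _).symm

end AddCommGroup

variable [NormedAddCommGroup E] [InnerProductSpace ℝ E] [Fintype ι] {g : κ → ι → E}

def transversalEnergy (g : κ → ι → E) (σ : κ → Equiv.Perm ι) : ℝ :=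
  ∑ ℓ, ‖transversalSum g σ ℓ‖ ^ 2

/-- Composing `σ j` with the transposition of `i₁` and `i₂` moves the difference `d` on the right
from `S i₂` to `S i₁` (where `S = transversalSum g σ`), raising the energy by
`2 ⟪S i₁ - S i₂, d⟫ + 2 ‖d‖²`. -/
theorem inner_sub_transversalSum_le_of_minimizer [DecidableEq ι] [DecidableEq κ]
    {σ : κ → Equiv.Perm ι} (hσ : ∀ τ, transversalEnergy g σ ≤ transversalEnergy g τ)
    (j : κ) (i₁ i₂ : ι) :
    ⟪transversalSum g σ i₂ - transversalSum g σ i₁, g j (σ j i₂) - g j (σ j i₁)⟫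
      ≤ ‖g j (σ j i₂) - g j (σ j i₁)‖ ^ 2 := by
  rcases eq_or_ne i₁ i₂ with rfl | hne
  · simp
  set d := g j (σ j i₂) - g j (σ j i₁)
  set τ := Function.update σ j ((Equiv.swap i₁ i₂).trans (σ j))
  have hτ : ∀ i, transversalSum g τ i
      = transversalSum g σ i + (g j (σ j (Equiv.swap i₁ i₂ i)) - g j (σ j i)) := fun i => by
    rw [transversalSum_update, Equiv.trans_apply]
  have hτ₁ : transversalSum g τ i₁ = transversalSum g σ i₁ + d := by
    rw [hτ, Equiv.swap_apply_left]
  have hτ₂ : transversalSum g τ i₂ = transversalSum g σ i₂ - d := by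
    rw [hτ, Equiv.swap_apply_right, ← neg_sub, ← sub_eq_add_neg]
  have hdiff : transversalEnergy g τ - transversalEnergy g σ
      = (‖transversalSum g σ i₁ + d‖ ^ 2 - ‖transversalSum g σ i₁‖ ^ 2)
        + (‖transversalSum g σ i₂ - d‖ ^ 2 - ‖transversalSum g σ i₂‖ ^ 2) := by
    rw [transversalEnergy, transversalEnergy, ← sum_sub_distrib, ← hτ₁, ← hτ₂]
    refine Fintype.sum_eq_add i₁ i₂ hne fun i ⟨h₁, h₂⟩ => ?_
    rw [hτ, Equiv.swap_apply_of_ne_of_ne h₁ h₂, sub_self, add_zero, sub_self]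
  have := hσ τ
  rw [norm_add_sq_real (transversalSum g σ i₁) d, norm_sub_sq_real (transversalSum g σ i₂) d]
    at hdiff
  rw [inner_sub_left]
  linarith

theorem norm_sub_transversalSum_sq_le_of_minimizer [DecidableEq ι] [DecidableEq κ]
    {σ : κ → Equiv.Perm ι} (hσ : ∀ τ, transversalEnergy g σ ≤ transversalEnergy g τ) {D : ℝ}
    (hD : ∀ j i i', ‖g j i - g j i'‖ ≤ D) (ℓ i : ι) :
    ‖transversalSum g σ ℓ - transversalSum g σ i‖ ^ 2 ≤ Fintype.card κ * D ^ 2 :=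
  calc ‖transversalSum g σ ℓ - transversalSum g σ i‖ ^ 2
      = ∑ j, ⟪transversalSum g σ ℓ - transversalSum g σ i, g j (σ j ℓ) - g j (σ j i)⟫ := by
        rw [← inner_sum, ← transversalSum_sub_transversalSum, real_inner_self_eq_norm_sq]
    _ ≤ ∑ j, ‖g j (σ j ℓ) - g j (σ j i)‖ ^ 2 :=
        sum_le_sum fun j _ => inner_sub_transversalSum_le_of_minimizer hσ j i ℓ
    _ ≤ ∑ _j : κ, D ^ 2 :=
        sum_le_sum fun j _ => pow_le_pow_left₀ (norm_nonneg _) (hD j _ _) 2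
    _ = Fintype.card κ * D ^ 2 := by simp

theorem exists_perm_norm_transversalSum_sq_le (hg : ∀ j, ∑ i, g j i = 0) {D : ℝ}
    (hD : ∀ j i i', ‖g j i - g j i'‖ ≤ D) :
    ∃ σ : κ → Equiv.Perm ι, ∀ ℓ, ‖transversalSum g σ ℓ‖ ^ 2 ≤ Fintype.card κ * D ^ 2 := by
  classical
  obtain ⟨σ, hσ⟩ := Finite.exists_min (transversalEnergy g)
  refine ⟨σ, fun ℓ => le_of_mul_le_mul_left ?_ (Nat.cast_pos.mpr (Fintype.card_pos_iff.mpr ⟨ℓ⟩))⟩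
  calc (Fintype.card ι : ℝ) * ‖transversalSum g σ ℓ‖ ^ 2
      ≤ ∑ i, ‖transversalSum g σ ℓ - transversalSum g σ i‖ ^ 2 :=
        card_mul_norm_sq_le_sum_norm_sub_sq _ (sum_transversalSum_eq_zero hg σ) ℓ
    _ ≤ ∑ _i : ι, Fintype.card κ * D ^ 2 :=
        sum_le_sum fun i _ => norm_sub_transversalSum_sq_le_of_minimizer hσ hD ℓ i
    _ = Fintype.card ι * (Fintype.card κ * D ^ 2) := by simp

end TransversalSum

theorem exists_perm_dist_mean_le {E ι κ : Type*} [NormedAddCommGroup E] [InnerProductSpace ℝ E]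
    [Fintype ι] [Fintype κ] [Nonempty κ] (f : κ → ι → E) {D : ℝ}
    (hf : ∀ j i i', dist (f j i) (f j i') ≤ D) :
    ∃ σ : κ → Equiv.Perm ι, ∀ ℓ,
      dist ((Fintype.card κ : ℝ)⁻¹ • ∑ j, f j (σ j ℓ))
        ((Fintype.card κ : ℝ)⁻¹ • ∑ j, (Fintype.card ι : ℝ)⁻¹ • ∑ i, f j i)
        ≤ D / √(Fintype.card κ) := by
  set m : κ → E := fun j => (Fintype.card ι : ℝ)⁻¹ • ∑ i, f j i
  have hcentered : ∀ j, ∑ i, (f j i - m j) = 0 := fun j => by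
    rcases isEmpty_or_nonempty ι with hι | hι
    · simp
    rw [sum_sub_distrib, sum_const, card_univ, ← Nat.cast_smul_eq_nsmul ℝ,
      smul_inv_smul₀ (Nat.cast_ne_zero.mpr Fintype.card_ne_zero), sub_self]
  obtain ⟨σ, hσ⟩ := exists_perm_norm_transversalSum_sq_le hcentered (D := D)
    fun j i i' => by rw [sub_sub_sub_cancel_right, ← dist_eq_norm]; exact hf j i i'
  refine ⟨σ, fun ℓ => ?_⟩
  have hr : (0 : ℝ) < Fintype.card κ := Nat.cast_pos.mpr Fintype.card_pos
  have hD : 0 ≤ D := dist_nonneg.trans (hf (Classical.arbitrary κ) ℓ ℓ)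
  have hnorm : ‖transversalSum (fun j i => f j i - m j) σ ℓ‖ ≤ √(Fintype.card κ) * D := by
    rw [← Real.sqrt_sq hD, ← Real.sqrt_mul hr.le]
    exact Real.le_sqrt_of_sq_le (hσ ℓ)
  rw [dist_eq_norm, ← smul_sub, ← sum_sub_distrib, norm_smul, Real.norm_of_nonneg (by positivity)]
  calc (Fintype.card κ : ℝ)⁻¹ * ‖transversalSum (fun j i => f j i - m j) σ ℓ‖
      ≤ (Fintype.card κ : ℝ)⁻¹ * (√(Fintype.card κ) * D) := by gcongr
    _ = D / √(Fintype.card κ) := by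
        field_simp; rw [Real.sq_sqrt hr.le]

section TransversalParts

variable {E ι κ : Type*} [DecidableEq E] [Fintype κ] {Q : κ → Finset E}

def transversalParts (e : ∀ j, ι ≃ Q j) (i : ι) : Finset E :=
  univ.image fun j => (e j i : E)

theorem transversalParts_inter (hdisj : ∀ j j', j ≠ j' → Disjoint (Q j) (Q j'))
    (e : ∀ j, ι ≃ Q j) (i : ι) (j : κ) :
    transversalParts e i ∩ Q j = {(e j i : E)} := by
  ext x
  simp only [transversalParts, mem_inter, mem_image, mem_univ, true_and, mem_singleton]
  constructor
  · rintro ⟨⟨j', rfl⟩, hx⟩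
    obtain rfl : j' = j := by_contra fun h => disjoint_left.mp (hdisj j' j h) (e j' i).2 hx
    rfl
  · rintro rfl
    exact ⟨⟨j, rfl⟩, (e j i).2⟩

theorem disjoint_transversalParts (hdisj : ∀ j j', j ≠ j' → Disjoint (Q j) (Q j'))
    (e : ∀ j, ι ≃ Q j) {i i' : ι} (h : i ≠ i') :
    Disjoint (transversalParts e i) (transversalParts e i') := by
  refine disjoint_left.mpr fun x hx hx' => h ?_
  obtain ⟨j, -, rfl⟩ := mem_image.mp hx
  have hmem := mem_inter.mpr ⟨hx', (e j i).2⟩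
  rw [transversalParts_inter hdisj, mem_singleton] at hmem
  exact (e j).injective (Subtype.ext hmem)

theorem biUnion_transversalParts [Fintype ι] (e : ∀ j, ι ≃ Q j) :
    univ.biUnion (transversalParts e) = univ.biUnion Q := by
  ext x
  simp only [transversalParts, mem_biUnion, mem_image, mem_univ, true_and]
  constructor
  · rintro ⟨i, j, rfl⟩
    exact ⟨j, (e j i).2⟩
  · rintro ⟨j, hx⟩
    exact ⟨(e j).symm ⟨x, hx⟩, j, by simp⟩

theorem inv_card_smul_sum_mem_convexHull_transversalParts [AddCommGroup E] [Module ℝ E]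
    [Nonempty κ] (e : ∀ j, ι ≃ Q j) (i : ι) :
    (Fintype.card κ : ℝ)⁻¹ • ∑ j, (e j i : E) ∈ convexHull ℝ (transversalParts e i : Set E) := by
  have hmem := univ.centerMass_mem_convexHull (w := fun _ => (1 : ℝ)) (fun _ _ => zero_le_one)
    (by simpa using Fintype.card_pos)
    fun j _ => mem_coe.mpr (mem_image_of_mem (fun j => (e j i : E)) (mem_univ j))
  simpa [centerMass, transversalParts] using hmem

end TransversalParts

theorem colorful_no_dimensional_tverberg_general
    {E : Type*} [NormedAddCommGroup E] [InnerProductSpace ℝ E] [DecidableEq E]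
    (k r : ℕ) (hr : 1 ≤ r)
    (Q : Fin r → Finset E) (hcard : ∀ j, (Q j).card = k)
    (hdisj : ∀ j j', j ≠ j' → Disjoint (Q j) (Q j')) :
    ∃ Pparts : Fin k → Finset E,
      (∀ i i', i ≠ i' → Disjoint (Pparts i) (Pparts i')) ∧
      Finset.univ.biUnion Pparts = Finset.univ.biUnion Q ∧
      (∀ i j, (Pparts i ∩ Q j).card = 1) ∧
      ∃ c : E, ∀ i, ∃ p ∈ convexHull ℝ (↑(Pparts i) : Set E),
        dist p c ≤ (1 + Real.sqrt 2) / Real.sqrt (r : ℝ)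
          * ⨆ j, Metric.diam (↑(Q j) : Set E) := by
  have : Nonempty (Fin r) := ⟨⟨0, hr⟩⟩
  set D := ⨆ j, Metric.diam (↑(Q j) : Set E)
  have hdiam : ∀ j, Metric.diam (↑(Q j) : Set E) ≤ D := le_ciSup (Set.finite_range _).bddAbove
  let e : ∀ j, Fin k ≃ Q j := fun j => ((Q j).equivFinOfCardEq (hcard j)).symm
  obtain ⟨σ, hσ⟩ := exists_perm_dist_mean_le (fun j i => (e j i : E)) fun j i i' =>
    (Metric.dist_le_diam_of_mem (Q j).finite_toSet.isBounded (e j i).2 (e j i').2).trans (hdiam j)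
  let e' : ∀ j, Fin k ≃ Q j := fun j => (σ j).trans (e j)
  refine ⟨transversalParts e', fun i i' => disjoint_transversalParts hdisj e',
    biUnion_transversalParts e', fun i j => by rw [transversalParts_inter hdisj, card_singleton],
    (Fintype.card (Fin r) : ℝ)⁻¹ • ∑ j, (Fintype.card (Fin k) : ℝ)⁻¹ • ∑ i, (e j i : E),
    fun i => ⟨_, inv_card_smul_sum_mem_convexHull_transversalParts e' i, ?_⟩⟩
  have hD : 0 ≤ D := Real.iSup_nonneg fun j => Metric.diam_nonneg
  calc _ ≤ D / √r := by simpa [e'] using hσ i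
    _ ≤ (1 + √2) / √r * D := by
        rw [div_mul_eq_mul_div]
        gcongr
        exact le_mul_of_one_le_left hD (le_add_of_nonneg_right (Real.sqrt_nonneg 2))

/-- **Colorful no-dimensional Tverberg theorem** (Adiprasito, Bárány, Mustafa).
For pairwise disjoint sets `Q_1, …, Q_r`, each of size `k`, in a real inner product
space, there exist a transversal partition `{P_1, …, P_k}` of their union (with
`|P_i ∩ Q_j| = 1` for all `i, j`) and a point `c` such that the closed ball of radius
`((1 + √2)/√r)·max_j diam Q_j` centered at `c` intersects the convex hull of
every part. -/
theorem colorful_no_dimensional_tverberg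
    {E : Type*} [NormedAddCommGroup E] [InnerProductSpace ℝ E] [DecidableEq E]
    (k r : ℕ) (hk : 2 ≤ k) (hr : 1 ≤ r)
    (Q : Fin r → Finset E) (hcard : ∀ j, (Q j).card = k)
    (hdisj : ∀ j j', j ≠ j' → Disjoint (Q j) (Q j')) :
    ∃ Pparts : Fin k → Finset E,
      (∀ i i', i ≠ i' → Disjoint (Pparts i) (Pparts i')) ∧
      Finset.univ.biUnion Pparts = Finset.univ.biUnion Q ∧
      (∀ i j, (Pparts i ∩ Q j).card = 1) ∧
      ∃ c : E, ∀ i, ∃ p ∈ convexHull ℝ (↑(Pparts i) : Set E),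
        dist p c ≤ (1 + Real.sqrt 2) / Real.sqrt (r : ℝ)
          * ⨆ j, Metric.diam (↑(Q j) : Set E) :=
  colorful_no_dimensional_tverberg_general k r hr Q hcard hdisj
end

section
/- Let P_1, …, P_r be r ≥ 2 pairwise disjoint finite point sets in a real inner product space such that a point o lies in the convex hull of P_i for each i ∈ {1,…,r}. Then there exists a set Q ⊆ P_1 ∪ ⋯ ∪ P_r with |Q ∩ P_i| = 1 for every i such that the distance from o to the convex hull of Q is at most (1/√(2r))·max_{i ∈ [r]} diam P_i. -/
open Finset Metric Real

section Aux

variable {E : Type*} [NormedAddCommGroup E] [InnerProductSpace ℝ E]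

local notation "⟪" x ", " y "⟫" => @inner ℝ _ _ x y

lemma cnc_variance_le {s : Finset E} {w : E → ℝ} {o : E}
    (hw : ∀ p ∈ s, 0 ≤ w p) (h1 : ∑ p ∈ s, w p = 1)
    (h2 : ∑ p ∈ s, w p • p = o) :
    ∑ p ∈ s, w p * ‖p - o‖^2 ≤ Metric.diam (↑s : Set E)^2 / 2 := by
  have hz : ∑ p ∈ s, w p • (p - o) = 0 := by
    simp [smul_sub, Finset.sum_sub_distrib, ← Finset.sum_smul, h1, h2]
  set T := ∑ p ∈ s, w p * ‖p - o‖^2 with hT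
  have hcross : ∑ p ∈ s, ∑ q ∈ s, w p * w q * ⟪p - o, q - o⟫ = 0 := by
    have e : ∀ p ∈ s, ∑ q ∈ s, w p * w q * ⟪p - o, q - o⟫
        = ⟪w p • (p - o), ∑ q ∈ s, w q • (q - o)⟫ := by
      intro p _
      rw [inner_sum]
      refine Finset.sum_congr rfl fun q _ => ?_
      rw [real_inner_smul_left, real_inner_smul_right]; ring
    rw [Finset.sum_congr rfl e]
    simp [hz]
  have hT1 : ∑ p ∈ s, ∑ q ∈ s, w p * w q * ‖p - o‖^2 = T := by
    rw [hT]
    refine Finset.sum_congr rfl fun p _ => ?_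
    calc ∑ q ∈ s, w p * w q * ‖p - o‖^2
        = (w p * ‖p - o‖^2) * ∑ q ∈ s, w q := by
          rw [Finset.mul_sum]; exact Finset.sum_congr rfl fun q _ => by ring
      _ = w p * ‖p - o‖^2 := by rw [h1, mul_one]
  have hT2 : ∑ p ∈ s, ∑ q ∈ s, w p * w q * ‖q - o‖^2 = T := by
    calc ∑ p ∈ s, ∑ q ∈ s, w p * w q * ‖q - o‖^2
        = ∑ p ∈ s, w p * T := by
          refine Finset.sum_congr rfl fun p _ => ?_
          rw [hT, Finset.mul_sum]
          exact Finset.sum_congr rfl fun q _ => by ring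
      _ = T := by rw [← Finset.sum_mul, h1, one_mul]
  have key : ∑ p ∈ s, ∑ q ∈ s, w p * w q * ‖p - q‖^2 = 2 * T := by
    have expand : ∀ p q : E, w p * w q * ‖p - q‖^2
        = w p * w q * ‖p - o‖^2 + w p * w q * ‖q - o‖^2
          - 2 * (w p * w q * ⟪p - o, q - o⟫) := by
      intro p q
      have hpq : p - q = (p - o) - (q - o) := by abel
      rw [hpq, @norm_sub_sq_real]; ring
    calc ∑ p ∈ s, ∑ q ∈ s, w p * w q * ‖p - q‖^2
        = ∑ p ∈ s, ∑ q ∈ s, (w p * w q * ‖p - o‖^2 + w p * w q * ‖q - o‖^2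
            - 2 * (w p * w q * ⟪p - o, q - o⟫)) := by
          exact Finset.sum_congr rfl fun p _ => Finset.sum_congr rfl fun q _ => expand p q
      _ = (∑ p ∈ s, ∑ q ∈ s, w p * w q * ‖p - o‖^2)
            + (∑ p ∈ s, ∑ q ∈ s, w p * w q * ‖q - o‖^2)
            - 2 * ∑ p ∈ s, ∑ q ∈ s, w p * w q * ⟪p - o, q - o⟫ := by
          simp [Finset.sum_sub_distrib, Finset.sum_add_distrib, Finset.mul_sum]
      _ = 2 * T := by rw [hT1, hT2, hcross]; ring
  have hbound : ∑ p ∈ s, ∑ q ∈ s, w p * w q * ‖p - q‖^2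
      ≤ Metric.diam (↑s : Set E)^2 := by
    calc ∑ p ∈ s, ∑ q ∈ s, w p * w q * ‖p - q‖^2
        ≤ ∑ p ∈ s, ∑ q ∈ s, w p * w q * Metric.diam (↑s : Set E)^2 := by
          refine Finset.sum_le_sum fun p hp => Finset.sum_le_sum fun q hq => ?_
          refine mul_le_mul_of_nonneg_left ?_ (mul_nonneg (hw p hp) (hw q hq))
          have hd : dist p q ≤ Metric.diam (↑s : Set E) :=
            Metric.dist_le_diam_of_mem (s.finite_toSet.isBounded) (by exact_mod_cast hp)
              (by exact_mod_cast hq)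
          rw [dist_eq_norm] at hd
          exact pow_le_pow_left₀ (norm_nonneg _) hd 2
      _ = Metric.diam (↑s : Set E)^2 := by
          simp only [← Finset.sum_mul, ← Finset.mul_sum, h1]
          ring
  rw [key] at hbound
  linarith

omit [NormedAddCommGroup E] [InnerProductSpace ℝ E] in
lemma cnc_exists_le_avg {s : Finset E} {w : E → ℝ} (val : E → ℝ) {c : ℝ}
    (hw : ∀ p ∈ s, 0 ≤ w p) (h1 : ∑ p ∈ s, w p = 1)
    (h : ∑ p ∈ s, w p * val p ≤ c) : ∃ p ∈ s, val p ≤ c := by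
  by_contra hc
  push_neg at hc
  obtain ⟨i, hi, hwi⟩ : ∃ i ∈ s, 0 < w i := by
    by_contra h'
    push_neg at h'
    have h0 : ∑ p ∈ s, w p = 0 :=
      Finset.sum_eq_zero fun p hp => le_antisymm (h' p hp) (hw p hp)
    rw [h0] at h1; norm_num at h1
  have hlt : ∑ p ∈ s, w p * c < ∑ p ∈ s, w p * val p := by
    apply Finset.sum_lt_sum
    · intro j hj; exact mul_le_mul_of_nonneg_left (hc j hj).le (hw j hj)
    · exact ⟨i, hi, mul_lt_mul_of_pos_left (hc i hi) hwi⟩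
  rw [← Finset.sum_mul, h1, one_mul] at hlt
  linarith

lemma cnc_exists_step {s : Finset E} {w : E → ℝ} {o : E}
    (hw : ∀ p ∈ s, 0 ≤ w p) (h1 : ∑ p ∈ s, w p = 1)
    (h2 : ∑ p ∈ s, w p • p = o) (v : E) :
    ∃ q ∈ s, 2 * ⟪q - o, v⟫ + ‖q - o‖^2 ≤ Metric.diam (↑s : Set E)^2 / 2 := by
  apply cnc_exists_le_avg _ hw h1
  have hz : ∑ p ∈ s, w p • (p - o) = 0 := by
    simp [smul_sub, Finset.sum_sub_distrib, ← Finset.sum_smul, h1, h2]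
  have hsplit : ∑ p ∈ s, w p * (2 * ⟪p - o, v⟫ + ‖p - o‖^2)
      = 2 * ⟪∑ p ∈ s, w p • (p - o), v⟫ + ∑ p ∈ s, w p * ‖p - o‖^2 := by
    rw [sum_inner, Finset.mul_sum, ← Finset.sum_add_distrib]
    refine Finset.sum_congr rfl fun p _ => ?_
    rw [real_inner_smul_left]; ring
  rw [hsplit, hz]
  simpa using cnc_variance_le hw h1 h2

end Aux

local notation "⟪" x ", " y "⟫" => @inner ℝ _ _ x y

/-- **Colorful no-dimensional Carathéodory theorem** (Adiprasito, Bárány, Mustafa).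
Let `P_1, …, P_r` (`r ≥ 2`) be pairwise disjoint finite point sets in a real inner
product space such that a point `o` lies in the convex hull of each `P_i`. Then there
is a transversal `Q` of the sets (one point from each `P_i`) such that the distance
from `o` to the convex hull of `Q` is at most `(1/√(2r))·max_i diam P_i`. -/
theorem colorful_no_dimensional_caratheodory
    {E : Type*} [NormedAddCommGroup E] [InnerProductSpace ℝ E] [DecidableEq E]
    (r : ℕ) (hr : 2 ≤ r)
    (P : Fin r → Finset E)
    (hdisj : ∀ i i', i ≠ i' → Disjoint (P i) (P i'))
    (o : E) (ho : ∀ i, o ∈ convexHull ℝ (↑(P i) : Set E)) :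
    ∃ Q : Finset E,
      Q ⊆ Finset.univ.biUnion P ∧
      (∀ i, (Q ∩ P i).card = 1) ∧
      Metric.infDist o (convexHull ℝ (↑Q : Set E)) ≤
        1 / Real.sqrt (2 * (r : ℝ)) * ⨆ i, Metric.diam (↑(P i) : Set E) := by
  have hrpos : 0 < r := by omega
  haveI : Nonempty (Fin r) := ⟨⟨0, hrpos⟩⟩
  set D : ℝ := ⨆ i, Metric.diam (↑(P i) : Set E) with hD
  have hD0 : 0 ≤ D := Real.iSup_nonneg fun i => Metric.diam_nonneg
  have hDle : ∀ i, Metric.diam (↑(P i) : Set E) ≤ D := fun i =>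
    le_ciSup (f := fun i => Metric.diam (↑(P i) : Set E))
      (Set.Finite.bddAbove (Set.finite_range _)) i
  -- weights
  have hwex : ∀ i, ∃ w : E → ℝ, (∀ y ∈ P i, 0 ≤ w y) ∧ (∑ y ∈ P i, w y = 1) ∧
      (∑ y ∈ P i, w y • y = o) := by
    intro i
    obtain ⟨w, hw0, hw1, hwc⟩ := (Finset.mem_convexHull).1 (ho i)
    refine ⟨w, hw0, hw1, ?_⟩
    rw [Finset.centerMass_eq_of_sum_1 _ _ hw1] at hwc
    simpa using hwc
  choose w hw0 hw1 hwc using hwex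
  have hPne : ∀ i, (P i).Nonempty := by
    intro i
    rw [← Finset.coe_nonempty]
    exact convexHull_nonempty_iff.1 ⟨o, ho i⟩
  -- induction
  have main : ∀ k : ℕ, k ≤ r → ∃ f : Fin r → E, (∀ i, f i ∈ P i) ∧
      ‖∑ i ∈ Finset.univ.filter (fun i : Fin r => (i : ℕ) < k), (f i - o)‖^2
        ≤ k * D^2 / 2 := by
    intro k
    induction k with
    | zero =>
      intro _
      refine ⟨fun i => (hPne i).choose, fun i => (hPne i).choose_spec, ?_⟩
      simp
    | succ k ih =>
      intro hk1
      obtain ⟨f, hf, hfb⟩ := ih (by omega)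
      set ik : Fin r := ⟨k, by omega⟩ with hik
      set S := ∑ i ∈ Finset.univ.filter (fun i : Fin r => (i : ℕ) < k), (f i - o) with hS
      obtain ⟨q, hq, hqb⟩ := cnc_exists_step (hw0 ik) (hw1 ik) (hwc ik) S
      refine ⟨Function.update f ik q, ?_, ?_⟩
      · intro i
        rcases eq_or_ne i ik with rfl | hne
        · simpa using hq
        · rw [Function.update_of_ne hne]; exact hf i
      · have hins : Finset.univ.filter (fun i : Fin r => (i : ℕ) < k + 1)
            = insert ik (Finset.univ.filter (fun i : Fin r => (i : ℕ) < k)) := by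
          ext i
          simp only [Finset.mem_filter, Finset.mem_insert, Finset.mem_univ, true_and]
          constructor
          · intro h
            rcases Nat.lt_succ_iff_lt_or_eq.1 h with h | h
            · exact Or.inr h
            · exact Or.inl (Fin.ext h)
          · rintro (rfl | h)
            · simp [hik]
            · omega
        have hnotmem : ik ∉ Finset.univ.filter (fun i : Fin r => (i : ℕ) < k) := by
          simp [hik]
        rw [hins, Finset.sum_insert hnotmem]
        have hSeq : ∑ i ∈ Finset.univ.filter (fun i : Fin r => (i : ℕ) < k),
            (Function.update f ik q i - o) = S := by
          rw [hS]
          refine Finset.sum_congr rfl fun i hi => ?_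
          have : i ≠ ik := by
            simp only [Finset.mem_filter] at hi
            intro h; rw [h] at hi; simp [hik] at hi
          rw [Function.update_of_ne this]
        rw [hSeq, Function.update_self]
        have hnorm : ‖q - o + S‖^2 = ‖S‖^2 + (2 * ⟪q - o, S⟫ + ‖q - o‖^2) := by
          rw [@norm_add_sq_real]; ring
        rw [hnorm]
        have hdiam2 : Metric.diam (↑(P ik) : Set E)^2 / 2 ≤ D^2 / 2 := by
          have := pow_le_pow_left₀ Metric.diam_nonneg (hDle ik) 2
          linarith
        push_cast
        linarith
  obtain ⟨f, hf, hfb⟩ := main r le_rfl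
  have hfull : Finset.univ.filter (fun i : Fin r => (i : ℕ) < r) = Finset.univ := by
    refine Finset.filter_true_of_mem fun i _ => i.2
  rw [hfull] at hfb
  set S := ∑ i : Fin r, (f i - o) with hS
  -- the candidate point
  set c : E := (Finset.univ : Finset (Fin r)).centerMass (fun _ => (1:ℝ)) f with hc
  have hcsum : ∑ _i : Fin r, (1:ℝ) = (r : ℝ) := by simp
  refine ⟨Finset.image f Finset.univ, ?_, ?_, ?_⟩
  · intro x hx
    simp only [Finset.mem_image] at hx
    obtain ⟨i, _, rfl⟩ := hx
    exact Finset.mem_biUnion.2 ⟨i, Finset.mem_univ i, hf i⟩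
  · intro i
    have : Finset.image f Finset.univ ∩ P i = {f i} := by
      ext x
      simp only [Finset.mem_inter, Finset.mem_image, Finset.mem_singleton,
        Finset.mem_univ, true_and]
      constructor
      · rintro ⟨⟨j, rfl⟩, hx⟩
        rcases eq_or_ne j i with rfl | hne
        · rfl
        · exact absurd hx (Finset.disjoint_left.1 (hdisj j i hne) (hf j))
      · rintro rfl
        exact ⟨⟨i, rfl⟩, hf i⟩
    rw [this, Finset.card_singleton]
  · have hmem : c ∈ convexHull ℝ (↑(Finset.image f Finset.univ) : Set E) := by
      apply Finset.centerMass_mem_convexHull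
      · intro i _; norm_num
      · rw [hcsum]; positivity
      · intro i _
        exact Finset.mem_coe.2 (Finset.mem_image_of_mem f (Finset.mem_univ i))
    refine le_trans (Metric.infDist_le_dist_of_mem hmem) ?_
    have hceq : c = (r : ℝ)⁻¹ • ∑ i : Fin r, f i := by
      rw [hc, Finset.centerMass, hcsum]
      simp
    have hdiff : c - o = (r : ℝ)⁻¹ • S := by
      rw [hceq, hS, Finset.sum_sub_distrib, smul_sub]
      congr 1
      simp only [Finset.sum_const, Finset.card_univ, Fintype.card_fin]
      rw [← Nat.cast_smul_eq_nsmul ℝ, smul_smul]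
      rw [inv_mul_cancel₀ (by exact_mod_cast hrpos.ne')]
      simp
    have hdist : dist o c = (r:ℝ)⁻¹ * ‖S‖ := by
      rw [dist_eq_norm, ← norm_neg, neg_sub, hdiff, norm_smul]
      simp [abs_of_nonneg (by positivity : (0:ℝ) ≤ (r:ℝ)⁻¹)]
    rw [hdist]
    have hSnorm : ‖S‖ ≤ Real.sqrt (r * D^2 / 2) := by
      have h0 : ‖S‖ = Real.sqrt (‖S‖^2) := by rw [Real.sqrt_sq (norm_nonneg _)]
      rw [h0]
      exact Real.sqrt_le_sqrt hfb
    have hrR : (0:ℝ) < (r:ℝ) := by exact_mod_cast hrpos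
    calc (r:ℝ)⁻¹ * ‖S‖ ≤ (r:ℝ)⁻¹ * Real.sqrt (r * D^2 / 2) := by
          exact mul_le_mul_of_nonneg_left hSnorm (by positivity)
      _ = 1 / Real.sqrt (2 * r) * D := by
          have ha : (0:ℝ) ≤ (r:ℝ)⁻¹ * Real.sqrt (r * D^2 / 2) := by positivity
          have hb : (0:ℝ) ≤ 1 / Real.sqrt (2 * r) * D := by positivity
          have hsq : ((r:ℝ)⁻¹ * Real.sqrt (r * D^2 / 2))^2
              = (1 / Real.sqrt (2 * r) * D)^2 := by
            rw [mul_pow, mul_pow, Real.sq_sqrt (by positivity : (0:ℝ) ≤ (r:ℝ) * D^2 / 2),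
              div_pow, one_pow, Real.sq_sqrt (by positivity : (0:ℝ) ≤ 2 * (r:ℝ))]
            field_simp
          calc (r:ℝ)⁻¹ * Real.sqrt (r * D^2 / 2)
              = Real.sqrt (((r:ℝ)⁻¹ * Real.sqrt (r * D^2 / 2))^2) := by
                rw [Real.sqrt_sq ha]
            _ = Real.sqrt ((1 / Real.sqrt (2 * r) * D)^2) := by rw [hsq]
            _ = 1 / Real.sqrt (2 * r) * D := Real.sqrt_sq hb
end

section
/- Let m ≥ 1 and r ≥ 1 be integers and let Q_1, …, Q_r be pairwise disjoint sets in a real inner product space, each of size 2m, and set P = Q_1 ∪ ⋯ ∪ Q_r. Then there is a subset Q of P with |Q ∩ Q_i| = m for each i ∈ {1,…,r} such that ‖c(Q) − c(P)‖ ≤ (1/√(2m−1)) · (diam P)/√(2r). -/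
/-!
Pick in each `Q i` an `m`-subset `A i` independently and uniformly at random and let `S` be
their union. Then `c(S) - c(P)` is the mean of the `r` independent centred vectors
`c(A i) - c(Q i)`, so its expected squared norm is `1/r²` times the sum of their second moments.
Sampling `m` of `2m` points without replacement gives
`E ‖c(A i) - c(Q i)‖² = σᵢ² / (2m - 1)` with `σᵢ² = (1/2m) ∑ₚ ‖p - c(Q i)‖² ≤ (diam P)² / 2`,
the last bound because `∑ₚ ∑_q ‖p - q‖² = 2 |Q i| ∑ₚ ‖p - c(Q i)‖²`. Some choice of the `A i`
is no worse than the average. Expectations appear as sums over `Fintype.piFinset` of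
`Finset.powersetCard`s.
-/

/-- The centroid of a finite point set `S`: `c(S) = (1/|S|)·∑_{p ∈ S} p`. -/
noncomputable def centroid {E : Type*} [AddCommGroup E] [Module ℝ E] (S : Finset E) : E :=
  ((S.card : ℝ))⁻¹ • ∑ p ∈ S, p

open Finset
open scoped InnerProductSpace

namespace Finset

variable {α M : Type*} [DecidableEq α] [AddCommMonoid M]

theorem sum_sum_comm_of_subset {T : Finset α} {S : Finset (Finset α)} (hS : ∀ A ∈ S, A ⊆ T)
    (g : Finset α → α → M) :
    ∑ A ∈ S, ∑ p ∈ A, g A p = ∑ p ∈ T, ∑ A ∈ S with p ∈ A, g A p := by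
  refine sum_comm' fun A p => ?_
  simp only [mem_filter]
  exact ⟨fun ⟨hA, hp⟩ => ⟨⟨hA, hp⟩, hS A hA hp⟩, fun ⟨h, _⟩ => h⟩

theorem sum_sum_eq_sum_card_filter_mem_smul {T : Finset α} {S : Finset (Finset α)}
    (hS : ∀ A ∈ S, A ⊆ T) (g : α → M) :
    ∑ A ∈ S, ∑ p ∈ A, g p = ∑ p ∈ T, #{A ∈ S | p ∈ A} • g p := by
  simp only [sum_sum_comm_of_subset hS, sum_const]

theorem sum_sum_sum_eq_sum_sum_card_filter_mem_smul {T : Finset α} {S : Finset (Finset α)}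
    (hS : ∀ A ∈ S, A ⊆ T) (f : α → α → M) :
    ∑ A ∈ S, ∑ p ∈ A, ∑ q ∈ A, f p q = ∑ p ∈ T, ∑ q ∈ T, #{A ∈ S | p ∈ A ∧ q ∈ A} • f p q := by
  rw [sum_sum_comm_of_subset hS]
  refine sum_congr rfl fun p _ => ?_
  rw [sum_sum_eq_sum_card_filter_mem_smul fun A hA => hS A (mem_filter.1 hA).1]
  simp only [filter_filter]

theorem card_powersetCard_filter_mem {T : Finset α} (k : ℕ) {p : α} (hp : p ∈ T) :
    #{A ∈ T.powersetCard (k + 1) | p ∈ A} = (#T - 1).choose k := by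
  simpa using card_filter_powersetCard_subset {p} T (k + 1) (by simpa) (by simp)

theorem card_powersetCard_filter_mem_mem_add_choose {T : Finset α} (k : ℕ) {p q : α}
    (hp : p ∈ T) (hq : q ∈ T) (hpq : p ≠ q) :
    #{A ∈ T.powersetCard (k + 1) | p ∈ A ∧ q ∈ A} + (#T - 2).choose k = (#T - 1).choose k := by
  obtain ⟨n, hn⟩ : ∃ n, #T = n + 2 := ⟨#T - 2, by have := one_lt_card.2 ⟨p, hp, q, hq, hpq⟩; omega⟩
  cases k with
  | zero =>
    suffices {A ∈ T.powersetCard 1 | p ∈ A ∧ q ∈ A} = ∅ by simp [this]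
    refine filter_eq_empty_iff.2 fun A hA ⟨hpA, hqA⟩ => hpq ?_
    exact card_le_one.1 (mem_powersetCard.1 hA).2.le p hpA q hqA
  | succ j =>
    have h := card_filter_powersetCard_subset {p, q} T (j + 2) (insert_subset hp (by simpa))
      (by simp [card_pair hpq])
    simp only [card_pair hpq, insert_subset_iff, singleton_subset_iff] at h
    rw [h, hn]
    simpa using (Nat.choose_succ_succ n j).symm

end Finset

section SecondMoment

variable {α F : Type*} [NormedAddCommGroup F] [InnerProductSpace ℝ F]

theorem sum_powersetCard_norm_sum_sq (T : Finset α) (k : ℕ) (v : α → F)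
    (hv : ∑ p ∈ T, v p = 0) :
    ∑ A ∈ T.powersetCard (k + 1), ‖∑ p ∈ A, v p‖ ^ 2
      = (#T - 2).choose k * ∑ p ∈ T, ‖v p‖ ^ 2 := by
  classical
  set C₁ : ℝ := ↑((#T - 1).choose k)
  set C₂ : ℝ := ↑((#T - 2).choose k)
  have hcount : ∀ p ∈ T, ∀ q ∈ T,
      (#{A ∈ T.powersetCard (k + 1) | p ∈ A ∧ q ∈ A} : ℝ) = C₁ - C₂ + if p = q then C₂ else 0 := by
    intro p hp q hq
    split_ifs with hpq
    · subst hpq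
      simp only [and_self, card_powersetCard_filter_mem k hp, C₁]
      ring
    · have := card_powersetCard_filter_mem_mem_add_choose k hp hq hpq
      simp only [C₁, C₂, ← this]
      push_cast
      ring
  calc ∑ A ∈ T.powersetCard (k + 1), ‖∑ p ∈ A, v p‖ ^ 2
      = ∑ A ∈ T.powersetCard (k + 1), ∑ p ∈ A, ∑ q ∈ A, ⟪v p, v q⟫_ℝ := by
        simp_rw [← real_inner_self_eq_norm_sq, sum_inner, inner_sum]
    _ = ∑ p ∈ T, ∑ q ∈ T, ((C₁ - C₂) * ⟪v p, v q⟫_ℝ + if p = q then C₂ * ⟪v p, v p⟫_ℝ else 0) := by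
        rw [sum_sum_sum_eq_sum_sum_card_filter_mem_smul fun A hA => (mem_powersetCard.1 hA).1]
        refine sum_congr rfl fun p hp => sum_congr rfl fun q hq => ?_
        rw [nsmul_eq_mul, hcount p hp q hq]
        split_ifs with hpq
        · subst hpq; ring
        · ring
    _ = (C₁ - C₂) * ∑ p ∈ T, ⟪v p, ∑ q ∈ T, v q⟫_ℝ + C₂ * ∑ p ∈ T, ⟪v p, v p⟫_ℝ := by
        simp [sum_add_distrib, inner_sum, mul_sum]
    _ = C₂ * ∑ p ∈ T, ‖v p‖ ^ 2 := by
        simp only [hv, inner_zero_right, sum_const_zero, mul_zero, zero_add,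
          real_inner_self_eq_norm_sq]

end SecondMoment

section Centroid

variable {E : Type*} [AddCommGroup E] [Module ℝ E]

theorem centroid_sub_eq_inv_card_smul_sum_sub {A : Finset E} (hA : A.Nonempty) (x : E) :
    centroid A - x = (#A : ℝ)⁻¹ • ∑ p ∈ A, (p - x) := by
  rw [sum_sub_distrib, sum_const, ← Nat.cast_smul_eq_nsmul ℝ, smul_sub, smul_smul,
    inv_mul_cancel₀ (by simpa using hA.ne_empty), one_smul, _root_.centroid]

theorem sum_sub_centroid (T : Finset E) : ∑ p ∈ T, (p - centroid T) = 0 := by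
  rcases T.eq_empty_or_nonempty with rfl | hT
  · simp
  · have h := centroid_sub_eq_inv_card_smul_sum_sub hT (centroid T)
    rw [sub_self, eq_comm, smul_eq_zero] at h
    exact h.resolve_left (by simpa using hT.ne_empty)

theorem sum_powersetCard_centroid_sub_centroid (T : Finset E) (k : ℕ) :
    ∑ A ∈ T.powersetCard (k + 1), (centroid A - centroid T) = 0 := by
  classical
  have hA : ∀ A ∈ T.powersetCard (k + 1),
      centroid A - centroid T = ((k + 1 : ℕ) : ℝ)⁻¹ • ∑ p ∈ A, (p - centroid T) := by
    intro A hA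
    obtain ⟨-, hcard⟩ := mem_powersetCard.1 hA
    rw [centroid_sub_eq_inv_card_smul_sum_sub (card_pos.1 (by omega)), hcard]
  rw [sum_congr rfl hA, ← smul_sum,
    sum_sum_eq_sum_card_filter_mem_smul fun A hA => (mem_powersetCard.1 hA).1,
    sum_congr rfl fun p hp => by rw [card_powersetCard_filter_mem k hp], ← smul_sum,
    sum_sub_centroid, smul_zero, smul_zero]

variable [DecidableEq E]

theorem centroid_biUnion {ι : Type*} {s : Finset ι} {A : ι → Finset E}
    (hA : (s : Set ι).PairwiseDisjoint A) {k : ℕ} (hk : ∀ i ∈ s, #(A i) = k) :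
    centroid (s.biUnion A) = (#s : ℝ)⁻¹ • ∑ i ∈ s, centroid (A i) := by
  have hsum : ∑ i ∈ s, centroid (A i) = (k : ℝ)⁻¹ • ∑ i ∈ s, ∑ p ∈ A i, p := by
    rw [smul_sum]
    exact sum_congr rfl fun i hi => by rw [_root_.centroid, hk i hi]
  rw [hsum, smul_smul, ← mul_inv, _root_.centroid, card_biUnion hA, sum_biUnion hA,
    sum_congr rfl hk, sum_const, smul_eq_mul, Nat.cast_mul]

theorem centroid_biUnion_sub_centroid_biUnion {ι : Type*} [Fintype ι] {A Q : ι → Finset E}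
    (hQ : Pairwise fun i j => Disjoint (Q i) (Q j)) (hAQ : ∀ i, A i ⊆ Q i) {a b : ℕ}
    (hA : ∀ i, #(A i) = a) (hQb : ∀ i, #(Q i) = b) :
    centroid (univ.biUnion A) - centroid (univ.biUnion Q)
      = (Fintype.card ι : ℝ)⁻¹ • ∑ i, (centroid (A i) - centroid (Q i)) := by
  have hQ' : (↑(univ : Finset ι) : Set ι).PairwiseDisjoint Q := hQ.set_pairwise _
  rw [centroid_biUnion (hQ'.mono_on fun i _ => hAQ i) fun i _ => hA i,
    centroid_biUnion hQ' fun i _ => hQb i, sum_sub_distrib, smul_sub, card_univ]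

end Centroid

section Variance

variable {α F : Type*} [NormedAddCommGroup F] [InnerProductSpace ℝ F]

theorem sum_sum_norm_sub_sq_of_sum_eq_zero (T : Finset α) (v : α → F) (hv : ∑ p ∈ T, v p = 0) :
    ∑ p ∈ T, ∑ q ∈ T, ‖v p - v q‖ ^ 2 = 2 * #T * ∑ p ∈ T, ‖v p‖ ^ 2 := by
  simp only [norm_sub_sq_real, sum_add_distrib, sum_sub_distrib, ← inner_sum, hv, inner_zero_right,
    mul_zero, sub_zero, sum_const, nsmul_eq_mul, ← mul_sum]
  ring

theorem sum_norm_sub_centroid_sq_le (T : Finset F) {D : ℝ}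
    (hD : ∀ p ∈ T, ∀ q ∈ T, dist p q ≤ D) :
    ∑ p ∈ T, ‖p - centroid T‖ ^ 2 ≤ #T * D ^ 2 / 2 := by
  rcases T.eq_empty_or_nonempty with rfl | hT
  · simp
  have hid := sum_sum_norm_sub_sq_of_sum_eq_zero T (· - centroid T) (sum_sub_centroid T)
  simp only [sub_sub_sub_cancel_right] at hid
  have hle : ∑ p ∈ T, ∑ q ∈ T, ‖p - q‖ ^ 2 ≤ ∑ p ∈ T, ∑ q ∈ T, D ^ 2 :=
    sum_le_sum fun p hp => sum_le_sum fun q hq =>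
      pow_le_pow_left₀ (norm_nonneg _) (dist_eq_norm p q ▸ hD p hp q hq) 2
  simp only [hid, sum_const, nsmul_eq_mul] at hle
  have hcard : (0 : ℝ) < #T := by exact_mod_cast hT.card_pos
  rw [le_div_iff₀ two_pos]
  nlinarith

theorem sum_powersetCard_norm_centroid_sub_sq_le (T : Finset F) (k : ℕ) (hT : #T = 2 * (k + 1))
    {D : ℝ} (hD : ∀ p ∈ T, ∀ q ∈ T, dist p q ≤ D) :
    ∑ A ∈ T.powersetCard (k + 1), ‖centroid A - centroid T‖ ^ 2
      ≤ #(T.powersetCard (k + 1)) * (D ^ 2 / (2 * (2 * k + 1))) := by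
  have hA : ∀ A ∈ T.powersetCard (k + 1), ‖centroid A - centroid T‖ ^ 2
      = ((k + 1 : ℝ)⁻¹) ^ 2 * ‖∑ p ∈ A, (p - centroid T)‖ ^ 2 := by
    intro A hA
    obtain ⟨-, hcard⟩ := mem_powersetCard.1 hA
    rw [centroid_sub_eq_inv_card_smul_sum_sub (card_pos.1 (by omega)), hcard, norm_smul, mul_pow,
      norm_inv]
    norm_cast
  have hbinom :
      ((k + 1) * (2 * (k + 1)).choose (k + 1) : ℝ) = 2 * (2 * k + 1) * (2 * k).choose k := by
    have := Nat.succ_mul_centralBinom_succ k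
    simp only [Nat.centralBinom_eq_two_mul_choose] at this
    exact_mod_cast this
  calc ∑ A ∈ T.powersetCard (k + 1), ‖centroid A - centroid T‖ ^ 2
      = ((k + 1 : ℝ)⁻¹) ^ 2 * ((2 * k).choose k * ∑ p ∈ T, ‖p - centroid T‖ ^ 2) := by
        rw [sum_congr rfl hA, ← mul_sum, sum_powersetCard_norm_sum_sq T k _ (sum_sub_centroid T),
          hT, show 2 * (k + 1) - 2 = 2 * k by omega]
    _ ≤ ((k + 1 : ℝ)⁻¹) ^ 2 * ((2 * k).choose k * (#T * D ^ 2 / 2)) := by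
        gcongr
        exact sum_norm_sub_centroid_sq_le T hD
    _ = #(T.powersetCard (k + 1)) * (D ^ 2 / (2 * (2 * k + 1))) := by
        rw [card_powersetCard, hT]
        field_simp
        push_cast
        linear_combination (-(k + 1 : ℝ) * D ^ 2) * hbinom

end Variance

namespace Fintype

variable {ι : Type*} [Fintype ι] [DecidableEq ι] {β : ι → Type*} [∀ i, DecidableEq (β i)]

theorem sum_piFinset_apply_eq_prod_card_smul {M : Type*} [AddCommMonoid M]
    (t : ∀ i, Finset (β i)) (i : ι) (g : β i → M) :
    ∑ f ∈ piFinset t, g (f i) = (∏ j ∈ univ.erase i, #(t j)) • ∑ a ∈ t i, g a := by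
  rw [← sum_fiberwise_of_maps_to fun f hf => mem_piFinset.1 hf i, smul_sum]
  refine Finset.sum_congr rfl fun a ha => ?_
  rw [Finset.sum_congr rfl fun f hf => by rw [(mem_filter.1 hf).2], sum_const,
    card_filter_piFinset_eq_of_mem t i ha]

variable {F : Type*} [NormedAddCommGroup F] [InnerProductSpace ℝ F]

theorem sum_piFinset_inner_eq_zero (t : ∀ i, Finset (β i)) (d : ∀ i, β i → F) {i j : ι}
    (hij : i ≠ j) (hd : ∑ a ∈ t i, d i a = 0) :
    ∑ f ∈ piFinset t, ⟪d i (f i), d j (f j)⟫_ℝ = 0 := by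
  rw [← sum_fiberwise_of_maps_to fun f hf => mem_piFinset.1 hf j]
  refine Finset.sum_eq_zero fun b hb => ?_
  rw [Finset.sum_congr rfl fun f hf => by rw [(mem_filter.1 hf).2], ← sum_inner,
    ← piFinset_update_singleton_eq_filter_piFinset_eq t j hb,
    sum_piFinset_apply_eq_prod_card_smul, Function.update_of_ne hij, hd, smul_zero,
    inner_zero_left]

theorem sum_piFinset_norm_sum_sq (t : ∀ i, Finset (β i)) (d : ∀ i, β i → F)
    (hd : ∀ i, ∑ a ∈ t i, d i a = 0) :
    ∑ f ∈ piFinset t, ‖∑ i, d i (f i)‖ ^ 2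
      = ∑ i, (∏ j ∈ univ.erase i, #(t j)) * ∑ a ∈ t i, ‖d i a‖ ^ 2 := by
  calc ∑ f ∈ piFinset t, ‖∑ i, d i (f i)‖ ^ 2
      = ∑ i, ∑ j, ∑ f ∈ piFinset t, ⟪d i (f i), d j (f j)⟫_ℝ := by
        simp_rw [← real_inner_self_eq_norm_sq, sum_inner, inner_sum]
        rw [sum_comm]
        exact Finset.sum_congr rfl fun i _ => sum_comm
    _ = ∑ i, ∑ f ∈ piFinset t, ⟪d i (f i), d i (f i)⟫_ℝ :=
        Finset.sum_congr rfl fun i _ => Finset.sum_eq_single i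
          (fun j _ hji => sum_piFinset_inner_eq_zero t d hji.symm (hd i)) (by simp)
    _ = _ := Finset.sum_congr rfl fun i _ => by
        simp_rw [real_inner_self_eq_norm_sq]
        rw [sum_piFinset_apply_eq_prod_card_smul t i (‖d i ·‖ ^ 2), nsmul_eq_mul]

theorem sum_piFinset_norm_sum_sq_le (t : ∀ i, Finset (β i)) (d : ∀ i, β i → F) (B : ι → ℝ)
    (hd : ∀ i, ∑ a ∈ t i, d i a = 0) (hB : ∀ i, ∑ a ∈ t i, ‖d i a‖ ^ 2 ≤ #(t i) * B i) :
    ∑ f ∈ piFinset t, ‖∑ i, d i (f i)‖ ^ 2 ≤ #(piFinset t) * ∑ i, B i := by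
  rw [sum_piFinset_norm_sum_sq t d hd, mul_sum]
  refine Finset.sum_le_sum fun i _ => ?_
  calc ((∏ j ∈ univ.erase i, #(t j) : ℕ) : ℝ) * ∑ a ∈ t i, ‖d i a‖ ^ 2
      ≤ (∏ j ∈ univ.erase i, #(t j) : ℕ) * (#(t i) * B i) := by gcongr; exact hB i
    _ = #(piFinset t) * B i := by
        rw [← mul_assoc, card_piFinset, ← mul_prod_erase univ _ (mem_univ i)]
        push_cast
        ring

theorem exists_mem_piFinset_norm_sum_sq_le (t : ∀ i, Finset (β i)) (d : ∀ i, β i → F)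
    (B : ι → ℝ) (ht : ∀ i, (t i).Nonempty) (hd : ∀ i, ∑ a ∈ t i, d i a = 0)
    (hB : ∀ i, ∑ a ∈ t i, ‖d i a‖ ^ 2 ≤ #(t i) * B i) :
    ∃ f ∈ piFinset t, ‖∑ i, d i (f i)‖ ^ 2 ≤ ∑ i, B i := by
  have h := sum_piFinset_norm_sum_sq_le t d B hd hB
  rw [← nsmul_eq_mul, ← sum_const] at h
  exact exists_le_of_sum_le (piFinset_nonempty.2 ht) h

end Fintype

theorem Finset.biUnion_inter_eq_of_pairwiseDisjoint {ι α : Type*} [DecidableEq α] {s : Finset ι}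
    {f Q : ι → Finset α} (hQ : (s : Set ι).PairwiseDisjoint Q) (hf : ∀ i ∈ s, f i ⊆ Q i) {i : ι}
    (hi : i ∈ s) : s.biUnion f ∩ Q i = f i := by
  ext x
  simp only [mem_inter, mem_biUnion]
  refine ⟨fun ⟨⟨j, hj, hxj⟩, hxi⟩ => ?_, fun hx => ⟨⟨i, hi, hx⟩, hf i hi hx⟩⟩
  obtain rfl | hji := eq_or_ne j i
  · exact hxj
  · exact absurd hxi (disjoint_left.1 (hQ hj hi hji) (hf j hj hxj))

theorem norm_inv_natCast_smul_le {F : Type*} [SeminormedAddCommGroup F] [NormedSpace ℝ F] {x : F}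
    {r : ℕ} {a D : ℝ} (ha : 0 ≤ a) (hD : 0 ≤ D) (hx : ‖x‖ ^ 2 ≤ r * (D ^ 2 / (2 * a))) :
    ‖(r : ℝ)⁻¹ • x‖ ≤ 1 / √a * (D / √(2 * r)) := by
  rw [← pow_le_pow_iff_left₀ (norm_nonneg _) (by positivity) two_ne_zero, norm_smul, mul_pow,
    mul_pow, div_pow, div_pow, one_pow, Real.sq_sqrt ha, Real.sq_sqrt (by positivity), norm_inv,
    Real.norm_natCast]
  calc (r : ℝ)⁻¹ ^ 2 * ‖x‖ ^ 2 ≤ (r : ℝ)⁻¹ ^ 2 * (r * (D ^ 2 / (2 * a))) := by gcongr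
    _ = 1 / a * (D ^ 2 / (2 * r)) := by
      rw [← mul_assoc, inv_pow, ← div_eq_inv_mul, sq, div_self_mul_self']
      field_simp

theorem halving_centroid_lemma_general
    {E : Type*} [NormedAddCommGroup E] [InnerProductSpace ℝ E] [DecidableEq E]
    (m r : ℕ) (hm : 1 ≤ m)
    (Q : Fin r → Finset E) (hcard : ∀ i, (Q i).card = 2 * m)
    (hdisj : ∀ i i', i ≠ i' → Disjoint (Q i) (Q i')) :
    ∃ S : Finset E,
      S ⊆ Finset.univ.biUnion Q ∧
      (∀ i, (S ∩ Q i).card = m) ∧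
      ‖centroid S - centroid (Finset.univ.biUnion Q)‖ ≤
        1 / Real.sqrt (2 * (m : ℝ) - 1) *
          (Metric.diam (↑(Finset.univ.biUnion Q) : Set E) / Real.sqrt (2 * (r : ℝ))) := by
  obtain ⟨k, rfl⟩ : ∃ k, m = k + 1 := ⟨m - 1, by omega⟩
  set P := univ.biUnion Q
  have hD : ∀ i, ∀ p ∈ Q i, ∀ q ∈ Q i, dist p q ≤ Metric.diam (P : Set E) := fun i p hp q hq =>
    Metric.dist_le_diam_of_mem P.finite_toSet.isBounded
      (mem_biUnion.2 ⟨i, mem_univ i, hp⟩) (mem_biUnion.2 ⟨i, mem_univ i, hq⟩)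
  obtain ⟨f, hf, hfB⟩ := Fintype.exists_mem_piFinset_norm_sum_sq_le
    (fun i => (Q i).powersetCard (k + 1)) (fun i A => centroid A - centroid (Q i)) _
    (fun i => powersetCard_nonempty.2 (by rw [hcard i]; omega))
    (fun i => sum_powersetCard_centroid_sub_centroid (Q i) k)
    (fun i => sum_powersetCard_norm_centroid_sub_sq_le (Q i) k (hcard i) (hD i))
  have hfQ : ∀ i, f i ⊆ Q i ∧ (f i).card = k + 1 := fun i =>
    mem_powersetCard.1 (Fintype.mem_piFinset.1 hf i)
  refine ⟨univ.biUnion f, biUnion_mono fun i _ => (hfQ i).1, fun i => ?_, ?_⟩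
  · rw [biUnion_inter_eq_of_pairwiseDisjoint (Pairwise.set_pairwise hdisj _)
      (fun i _ => (hfQ i).1) (mem_univ i), (hfQ i).2]
  · rw [centroid_biUnion_sub_centroid_biUnion hdisj (fun i => (hfQ i).1) (fun i => (hfQ i).2) hcard,
      Fintype.card_fin, show 2 * ((k + 1 : ℕ) : ℝ) - 1 = 2 * k + 1 by push_cast; ring]
    exact norm_inv_natCast_smul_le (by positivity) Metric.diam_nonneg (by simpa using hfB)

/-- **Halving lemma** (Adiprasito, Bárány, Mustafa). For pairwise disjoint `2m`-point
sets `Q_1, …, Q_r` in a real inner product space with union `P`, there is a subset `Q`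
of `P` sharing exactly `m` points with each `Q_i` such that
`‖c(Q) − c(P)‖ ≤ (1/√(2m−1)) · (diam P)/√(2r)`. -/
theorem halving_centroid_lemma
    {E : Type*} [NormedAddCommGroup E] [InnerProductSpace ℝ E] [DecidableEq E]
    (m r : ℕ) (hm : 1 ≤ m) (hr : 1 ≤ r)
    (Q : Fin r → Finset E) (hcard : ∀ i, (Q i).card = 2 * m)
    (hdisj : ∀ i i', i ≠ i' → Disjoint (Q i) (Q i')) :
    ∃ S : Finset E,
      S ⊆ Finset.univ.biUnion Q ∧
      (∀ i, (S ∩ Q i).card = m) ∧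
      ‖centroid S - centroid (Finset.univ.biUnion Q)‖ ≤
        1 / Real.sqrt (2 * (m : ℝ) - 1) *
          (Metric.diam (↑(Finset.univ.biUnion Q) : Set E) / Real.sqrt (2 * (r : ℝ))) :=
  halving_centroid_lemma_general m r hm Q hcard hdisj
end

section
/- Let Q_1, …, Q_r (r ≥ 2) be nonempty finite sets in a real inner product space and let D = diam(Q_1, …, Q_r) be the maximum distance ‖x − y‖ over pairs x ∈ Q_i, y ∈ Q_j with i ≠ j. Then there exist an index j ∈ {1,…,r} and a closed ball of radius D/√2 that covers Q_j. -/
/-!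
Among the Chebyshev centers `c i` of the sets `Q i`, taken inside the convex hull `K` of all
the points, let `c j` have the smallest radius `R`. By first-order optimality of `c j`, every
point `y ∈ K` sees some farthest point `x ∈ Q j` at an obtuse angle from `c j`, so
`‖y - c j‖² + R² ≤ ‖x - y‖²`. For `y` in another set `Q k` this is at most `D²`; if
`R > D/√2` this puts all of `Q k` strictly within distance `R` of `c j ∈ K`, contradicting
the minimality of `R`.
-/

open Filter Topology

namespace Finset

variable {E : Type*} [PseudoMetricSpace E] (Q : Finset E) (hQ : Q.Nonempty)

noncomputable def maxDist (z : E) : ℝ := Q.sup' hQ (dist · z)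

variable {Q}

theorem dist_le_maxDist {x : E} (hx : x ∈ Q) (z : E) : dist x z ≤ Q.maxDist hQ z :=
  Q.le_sup' (dist · z) hx

theorem maxDist_lt_iff {z : E} {a : ℝ} : Q.maxDist hQ z < a ↔ ∀ x ∈ Q, dist x z < a :=
  Q.sup'_lt_iff hQ

theorem continuous_maxDist : Continuous (Q.maxDist hQ) :=
  Continuous.finset_sup'_apply hQ fun _ _ => continuous_const.dist continuous_id

end Finset

section InnerProductSpace

variable {E : Type*} [NormedAddCommGroup E] [InnerProductSpace ℝ E]

theorem dist_sq_add_dist_sq_le_of_inner_nonpos {x y c : E} (h : inner ℝ (y - c) (x - c) ≤ 0) :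
    dist y c ^ 2 + dist x c ^ 2 ≤ dist x y ^ 2 := by
  have hxy : x - y = (x - c) - (y - c) := by abel
  rw [dist_eq_norm, dist_eq_norm, dist_eq_norm, hxy, norm_sub_sq_real (x - c), real_inner_comm]
  linarith

theorem eventually_dist_add_smul_sub_lt {x y c : E} (h : 0 < inner ℝ (y - c) (x - c)) :
    ∀ᶠ t in 𝓝[>] (0 : ℝ), dist x (c + t • (y - c)) < dist x c := by
  have hlim : Tendsto (fun t : ℝ => t * ‖y - c‖ ^ 2) (𝓝 0) (𝓝 0) := by
    simpa using (continuous_mul_const (‖y - c‖ ^ 2)).tendsto 0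
  have hpos : (0 : ℝ) < 2 * inner ℝ (y - c) (x - c) := by linarith
  filter_upwards [self_mem_nhdsWithin, nhdsWithin_le_nhds (hlim.eventually (gt_mem_nhds hpos))]
    with t (ht : 0 < t) hsmall
  have hexpand : dist x (c + t • (y - c)) ^ 2
      = dist x c ^ 2 - t * (2 * inner ℝ (y - c) (x - c) - t * ‖y - c‖ ^ 2) := by
    have hxz : x - (c + t • (y - c)) = (x - c) - t • (y - c) := by abel
    rw [dist_eq_norm, dist_eq_norm, hxz, norm_sub_sq_real, real_inner_smul_right, norm_smul,
      real_inner_comm, mul_pow, Real.norm_eq_abs, sq_abs]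
    ring
  refine lt_of_pow_lt_pow_left₀ 2 dist_nonneg ?_
  rw [hexpand]
  nlinarith

/-- First-order optimality of a Chebyshev center `c` of `Q` relative to a convex set `K`. -/
theorem exists_farthest_inner_nonpos {Q : Finset E} (hQ : Q.Nonempty) {K : Set E}
    (hK : Convex ℝ K) {c y : E} (hc : c ∈ K) (hy : y ∈ K) (hmin : IsMinOn (Q.maxDist hQ) K c) :
    ∃ x ∈ Q, dist x c = Q.maxDist hQ c ∧ inner ℝ (y - c) (x - c) ≤ 0 := by
  by_contra! hacute
  have hcloser : ∀ x ∈ Q, ∀ᶠ t in 𝓝[>] (0 : ℝ), dist x (c + t • (y - c)) < Q.maxDist hQ c := by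
    intro x hx
    rcases (Q.dist_le_maxDist hQ hx c).lt_or_eq with hlt | heq
    · have hcont : Continuous fun t : ℝ => dist x (c + t • (y - c)) := by fun_prop
      refine nhdsWithin_le_nhds ((hcont.tendsto' 0 _ ?_).eventually (gt_mem_nhds hlt))
      simp
    · exact heq ▸ eventually_dist_add_smul_sub_lt (hacute x hx heq)
  obtain ⟨t, hdist, ht⟩ := ((eventually_all_finset Q).2 hcloser).and (Ioo_mem_nhdsGT one_pos)
    |>.exists
  have hz : c + t • (y - c) ∈ K := hK.add_smul_sub_mem hc hy ⟨ht.1.le, ht.2.le⟩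
  exact (hmin hz).not_gt ((Finset.maxDist_lt_iff hQ).2 hdist)

theorem dist_sq_add_maxDist_sq_le {Q : Finset E} (hQ : Q.Nonempty) {K : Set E}
    (hK : Convex ℝ K) {c y : E} (hc : c ∈ K) (hy : y ∈ K) (hmin : IsMinOn (Q.maxDist hQ) K c)
    {D : ℝ} (hD : ∀ x ∈ Q, dist x y ≤ D) :
    dist y c ^ 2 + Q.maxDist hQ c ^ 2 ≤ D ^ 2 := by
  obtain ⟨x, hx, hfar, hobtuse⟩ := exists_farthest_inner_nonpos hQ hK hc hy hmin
  calc dist y c ^ 2 + Q.maxDist hQ c ^ 2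
      ≤ dist x y ^ 2 := hfar ▸ dist_sq_add_dist_sq_le_of_inner_nonpos hobtuse
    _ ≤ D ^ 2 := pow_le_pow_left₀ dist_nonneg (hD x hx) 2

theorem exists_forall_dist_le_div_sqrt_two {ι : Type*} [Finite ι] [Nontrivial ι]
    {Q : ι → Finset E} (hQ : ∀ i, (Q i).Nonempty) {D : ℝ}
    (hD : ∀ i k, i ≠ k → ∀ x ∈ Q i, ∀ y ∈ Q k, dist x y ≤ D) :
    ∃ j, ∃ c, ∀ x ∈ Q j, dist x c ≤ D / √2 := by
  set K := convexHull ℝ (⋃ i, (Q i : Set E))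
  have hQK : ∀ i, ∀ x ∈ Q i, x ∈ K := fun i x hx =>
    subset_convexHull ℝ _ (Set.mem_iUnion_of_mem i hx)
  have hKcompact : IsCompact K :=
    (Set.finite_iUnion fun i => (Q i).finite_toSet).isCompact_convexHull ℝ
  have hcenter : ∀ i, ∃ c ∈ K, IsMinOn ((Q i).maxDist (hQ i)) K c := fun i =>
    have ⟨x, hx⟩ := hQ i
    hKcompact.exists_isMinOn ⟨x, hQK i x hx⟩ (Finset.continuous_maxDist (hQ i)).continuousOn
  choose c hcK hcmin using hcenter
  let R i := (Q i).maxDist (hQ i) (c i)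
  obtain ⟨j, hj⟩ := Finite.exists_min R
  refine ⟨j, c j, fun x hx => (Finset.dist_le_maxDist (hQ j) hx _).trans ?_⟩
  obtain ⟨k, hkj⟩ := exists_ne j
  by_contra! hRD
  have hD0 : 0 ≤ D := by
    obtain ⟨x, hx⟩ := hQ j
    obtain ⟨y, hy⟩ := hQ k
    exact dist_nonneg.trans (hD j k hkj.symm x hx y hy)
  have hR0 : 0 ≤ R j := (div_nonneg hD0 (Real.sqrt_nonneg 2)).trans hRD.le
  have hD_sq : D ^ 2 < 2 * R j ^ 2 := by
    have hsqrt := Real.sq_sqrt (zero_le_two : (0 : ℝ) ≤ 2)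
    rw [div_lt_iff₀ (by positivity)] at hRD
    nlinarith
  have hcloser : (Q k).maxDist (hQ k) (c j) < R j := by
    refine (Finset.maxDist_lt_iff (hQ k)).2 fun y hy => lt_of_pow_lt_pow_left₀ 2 hR0 ?_
    have := dist_sq_add_maxDist_sq_le (hQ j) (convex_convexHull ℝ _) (hcK j) (hQK k y hy)
      (hcmin j) fun x hx => hD j k hkj.symm x hx y hy
    linarith
  exact (hcmin k (hcK j)).not_gt (hcloser.trans_le (hj k))

end InnerProductSpace

/-- **Colorful no-dimensional Jung theorem** (Akopyan). For nonempty finite sets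
`Q_1, …, Q_r` (`r ≥ 2`) in a real inner product space, letting
`D = diam(Q_1, …, Q_r)` be the maximum distance between points of distinct sets,
there is a closed ball of radius `D/√2` covering one of the sets `Q_j`. -/
theorem colorful_no_dimensional_jung
    {E : Type*} [NormedAddCommGroup E] [InnerProductSpace ℝ E]
    (r : ℕ) (hr : 2 ≤ r)
    (Q : Fin r → Finset E) (hne : ∀ i, (Q i).Nonempty)
    (D : ℝ)
    (hD : D = sSup {d : ℝ | ∃ i j, i ≠ j ∧ ∃ x ∈ Q i, ∃ y ∈ Q j, d = dist x y}) :
    ∃ (j : Fin r) (c : E), ∀ x ∈ Q j, dist x c ≤ D / Real.sqrt 2 := by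
  have : Nontrivial (Fin r) := Fin.nontrivial_iff_two_le.2 hr
  refine exists_forall_dist_le_div_sqrt_two hne fun i k hik x hx y hy => ?_
  have hfinite : {d : ℝ | ∃ i j, i ≠ j ∧ ∃ x ∈ Q i, ∃ y ∈ Q j, d = dist x y}.Finite := by
    have hS : (⋃ i, (Q i : Set E)).Finite := Set.finite_iUnion fun i => (Q i).finite_toSet
    refine (hS.image2 dist hS).subset ?_
    rintro _ ⟨i, j, -, x, hx, y, hy, rfl⟩
    exact ⟨x, Set.mem_iUnion_of_mem i hx, y, Set.mem_iUnion_of_mem j hy, rfl⟩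
  exact hD ▸ le_csSup hfinite.bddAbove ⟨i, k, hik, x, hx, y, hy, rfl⟩
end

section
/- Let k ≥ 2 and r ≥ 1 be integers, let n = k·r, and let P be a set of n points in a real inner product space. Then there exist a partition of P into k nonempty subsets P_1, …, P_k and a point c such that for every i ∈ {1,…,k} the closed ball of radius √(2/r)·diam P centered at c intersects the convex hull of P_i. -/
/-!
Index the points by `Fin k × Fin r` and take the rows as the parts. Among all rearrangements
choose one minimising the energy `∑ₗ ‖Sₗ‖²`, where `Sₗ` is the sum of row `l`. Exchanging a
point `a` of row `i` with a point `b` of row `j` changes the energy by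
`2⟪Sᵢ - Sⱼ, b - a⟫ + 2‖b - a‖²`, so minimality gives `⟪Sᵢ - Sⱼ, a - b⟫ ≤ (diam P)²`.
Summing over the `r²` such pairs yields `r ‖Sᵢ - Sⱼ‖² ≤ r² (diam P)²`, so the centroids of the
rows are pairwise within `diam P / √r ≤ √(2/r) · diam P`, and any one of them can serve as `c`.
-/

open Finset

theorem apply_swap_eq_add_ite_sub_ite {α G : Type*} [DecidableEq α] [AddCommGroup G]
    (y : α → G) (p q z : α) :
    y (Equiv.swap p q z) =
      y z + (if z = p then y q - y p else 0) - (if z = q then y q - y p else 0) := by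
  rcases eq_or_ne z p with rfl | hzp
  · rcases eq_or_ne z q with rfl | hzq <;> simp [*]
  · rcases eq_or_ne z q with rfl | hzq
    · simp [hzp]
    · simp [Equiv.swap_apply_of_ne_of_ne hzp hzq, hzp, hzq]

theorem sum_norm_sq_add_ite_sub_ite {E κ : Type*} [NormedAddCommGroup E] [InnerProductSpace ℝ E]
    [Fintype κ] [DecidableEq κ] (S : κ → E) {i j : κ} (hij : i ≠ j) (d : E) :
    ∑ l, ‖S l + (if l = i then d else 0) - (if l = j then d else 0)‖ ^ 2 =
      ∑ l, ‖S l‖ ^ 2 + 2 * inner ℝ (S i - S j) d + 2 * ‖d‖ ^ 2 := by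
  have hrest : ∀ l ∈ univ, l ∉ ({i, j} : Finset κ) →
      ‖S l + (if l = i then d else 0) - (if l = j then d else 0)‖ ^ 2 - ‖S l‖ ^ 2 = 0 := by
    intro l _ hl
    simp only [mem_insert, mem_singleton, not_or] at hl
    simp [hl.1, hl.2]
  suffices ∑ l, (‖S l + (if l = i then d else 0) - (if l = j then d else 0)‖ ^ 2 - ‖S l‖ ^ 2)
      = 2 * inner ℝ (S i - S j) d + 2 * ‖d‖ ^ 2 by
    rw [sum_sub_distrib] at this; linarith
  rw [← sum_subset (subset_univ _) hrest, sum_pair hij]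
  simp only [↓reduceIte, if_neg hij, if_neg hij.symm, add_zero, sub_zero]
  rw [norm_add_sq_real, norm_sub_sq_real, inner_sub_left]
  ring

section Rows

variable {κ τ α : Type*} [Fintype τ] {E : Type*} [NormedAddCommGroup E] [InnerProductSpace ℝ E]

def rowSum {M : Type*} [AddCommMonoid M] (y : κ × τ → M) (l : κ) : M := ∑ u, y (l, u)

noncomputable def rowMean (y : κ × τ → E) (l : κ) : E := (Fintype.card τ : ℝ)⁻¹ • rowSum y l

def rowImage [DecidableEq α] (y : κ × τ → α) (l : κ) : Finset α := univ.image fun u => y (l, u)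

theorem rowSum_comp_swap [DecidableEq κ] [DecidableEq τ] {G : Type*} [AddCommGroup G]
    (y : κ × τ → G) (i j : κ) (s t : τ) (l : κ) :
    rowSum (y ∘ Equiv.swap (i, s) (j, t)) l =
      rowSum y l + (if l = i then y (j, t) - y (i, s) else 0)
        - (if l = j then y (j, t) - y (i, s) else 0) := by
  simp [rowSum, apply_swap_eq_add_ite_sub_ite, sum_sub_distrib, sum_add_distrib, ite_and]

theorem sum_sum_inner_sub_eq (y : κ × τ → E) (v : E) (i j : κ) :
    ∑ s, ∑ t, inner ℝ v (y (j, t) - y (i, s)) =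
      Fintype.card τ * inner ℝ v (rowSum y j - rowSum y i) := by
  simp only [inner_sub_right, sum_sub_distrib, sum_const, card_univ, nsmul_eq_mul, rowSum,
    inner_sum, mul_sub, mul_sum]

theorem rowMean_mem_convexHull [DecidableEq E] [Nonempty τ] (y : κ × τ → E) (l : κ) :
    rowMean y l ∈ convexHull ℝ (rowImage y l : Set E) := by
  have hcard : (0 : ℝ) < Fintype.card τ := by exact_mod_cast Fintype.card_pos
  rw [rowMean, rowSum, smul_sum]
  refine (convex_convexHull ℝ _).sum_mem (fun _ _ => by positivity) ?_
    fun u _ => subset_convexHull ℝ _ (by simp [rowImage])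
  simp [hcard.ne']

theorem disjoint_rowImage [DecidableEq α] {y : κ × τ → α} (hy : Function.Injective y) {i j : κ}
    (hij : i ≠ j) : Disjoint (rowImage y i) (rowImage y j) := by
  simp only [disjoint_left, rowImage, mem_image, mem_univ, true_and, not_exists]
  rintro _ ⟨s, rfl⟩ t hts
  exact hij (congrArg Prod.fst (hy hts)).symm

theorem biUnion_rowImage [Fintype κ] [DecidableEq α] (y : κ × τ → α) :
    univ.biUnion (rowImage y) = univ.image y := by
  ext a
  simp [rowImage]

variable [Fintype κ]

def rowEnergy (y : κ × τ → E) : ℝ := ∑ l, ‖rowSum y l‖ ^ 2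

variable [DecidableEq κ] [DecidableEq τ]

theorem rowEnergy_comp_swap (y : κ × τ → E) {i j : κ} (hij : i ≠ j) (s t : τ) :
    rowEnergy (y ∘ Equiv.swap (i, s) (j, t)) = rowEnergy y
      + 2 * inner ℝ (rowSum y i - rowSum y j) (y (j, t) - y (i, s))
      + 2 * ‖y (j, t) - y (i, s)‖ ^ 2 := by
  simp only [rowEnergy, rowSum_comp_swap]
  exact sum_norm_sq_add_ite_sub_ite _ hij _

theorem norm_rowSum_sub_sq_le (y : κ × τ → E) {D : ℝ} (hD : ∀ a b, ‖y a - y b‖ ≤ D)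
    (hmin : ∀ p q, rowEnergy y ≤ rowEnergy (y ∘ Equiv.swap p q)) (i j : κ) :
    ‖rowSum y i - rowSum y j‖ ^ 2 ≤ Fintype.card τ * D ^ 2 := by
  rcases eq_or_ne i j with rfl | hij
  · rw [sub_self, norm_zero, zero_pow two_ne_zero]; positivity
  set v := rowSum y i - rowSum y j
  have hswap : ∀ s t, -D ^ 2 ≤ inner ℝ v (y (j, t) - y (i, s)) := by
    intro s t
    have h := hmin (i, s) (j, t)
    rw [rowEnergy_comp_swap y hij] at h
    have hd := hD (j, t) (i, s)
    nlinarith [norm_nonneg (y (j, t) - y (i, s))]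
  have hsum := sum_le_sum fun s (_ : s ∈ univ) => sum_le_sum fun t (_ : t ∈ univ) => hswap s t
  rw [sum_sum_inner_sub_eq, ← neg_sub, inner_neg_right, real_inner_self_eq_norm_sq] at hsum
  simp only [sum_const, card_univ, nsmul_eq_mul] at hsum
  rcases isEmpty_or_nonempty τ with hτ | hτ
  · simp [v, rowSum]
  · have : (0 : ℝ) < Fintype.card τ := by exact_mod_cast Fintype.card_pos
    nlinarith

theorem exists_perm_dist_rowMean_le (x : κ × τ → E) {D : ℝ} (hD0 : 0 ≤ D)
    (hD : ∀ a b, ‖x a - x b‖ ≤ D) :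
    ∃ σ : Equiv.Perm (κ × τ), ∀ i j,
      dist (rowMean (x ∘ σ) i) (rowMean (x ∘ σ) j) ≤ D / √(Fintype.card τ) := by
  obtain ⟨σ, hσ⟩ := Finite.exists_min fun σ : Equiv.Perm (κ × τ) => rowEnergy (x ∘ σ)
  refine ⟨σ, fun i j => ?_⟩
  have hsq := norm_rowSum_sub_sq_le (x ∘ σ) (fun a b => hD _ _)
    (fun p q => hσ (σ * Equiv.swap p q)) i j
  have hnorm : ‖rowSum (x ∘ σ) i - rowSum (x ∘ σ) j‖ ≤ √(Fintype.card τ) * D := by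
    rw [← Real.sqrt_sq (norm_nonneg _), ← Real.sqrt_sq hD0, ← Real.sqrt_mul (by positivity)]
    exact Real.sqrt_le_sqrt hsq
  rw [dist_eq_norm, rowMean, rowMean, ← smul_sub, norm_smul, Real.norm_eq_abs, abs_inv,
    Nat.abs_cast]
  calc (Fintype.card τ : ℝ)⁻¹ * ‖rowSum (x ∘ σ) i - rowSum (x ∘ σ) j‖
      ≤ (Fintype.card τ : ℝ)⁻¹ * (√(Fintype.card τ) * D) := by gcongr
    _ = D / √(Fintype.card τ) := by
      rw [← mul_assoc, inv_mul_eq_div, Real.sqrt_div_self', one_div_mul_eq_div]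

end Rows

theorem no_dimensional_tverberg_har_peled_robson_general
    {E : Type*} [NormedAddCommGroup E] [InnerProductSpace ℝ E] [DecidableEq E]
    (k r : ℕ) (hr : 1 ≤ r)
    (P : Finset E) (hP : P.card = k * r) :
    ∃ Pparts : Fin k → Finset E,
      (∀ i, (Pparts i).Nonempty) ∧
      (∀ i i', i ≠ i' → Disjoint (Pparts i) (Pparts i')) ∧
      Finset.univ.biUnion Pparts = P ∧
      ∃ c : E, ∀ i, ∃ p ∈ convexHull ℝ (↑(Pparts i) : Set E),
        dist p c ≤ Real.sqrt (2 / (r : ℝ)) * Metric.diam (↑P : Set E) := by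
  set D := Metric.diam (↑P : Set E)
  have hD (a b : P) : ‖(a : E) - b‖ ≤ D :=
    dist_eq_norm (a : E) b ▸ Metric.dist_le_diam_of_mem P.finite_toSet.isBounded a.2 b.2
  have : Nonempty (Fin r) := ⟨⟨0, hr⟩⟩
  let e : Fin k × Fin r ≃ P := Fintype.equivOfCardEq (by simp [hP])
  obtain ⟨σ, hσ⟩ := exists_perm_dist_rowMean_le (fun z => (e z : E)) Metric.diam_nonneg
    fun a b => hD _ _
  set y := (fun z => (e z : E)) ∘ σ
  have hy : Function.Injective y :=
    Subtype.val_injective.comp (e.injective.comp σ.injective)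
  have hradius : D / √r ≤ √(2 / r) * D := by
    rw [div_eq_inv_mul, ← Real.sqrt_inv]
    gcongr
    rw [div_eq_mul_inv]
    linarith [inv_nonneg.2 (Nat.cast_nonneg r : (0 : ℝ) ≤ r)]
  obtain ⟨c, hc⟩ : ∃ c, ∀ i, dist (rowMean y i) c ≤ D / √r := by
    rcases isEmpty_or_nonempty (Fin k) with hk | ⟨⟨i₀⟩⟩
    · exact ⟨0, isEmptyElim⟩
    · exact ⟨rowMean y i₀, fun i => by simpa using hσ i i₀⟩
  refine ⟨rowImage y, fun i => univ_nonempty.image _, fun i i' => disjoint_rowImage hy, ?_,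
    c, fun i => ⟨rowMean y i, rowMean_mem_convexHull y i, (hc i).trans hradius⟩⟩
  rw [biUnion_rowImage]
  ext a
  simp only [mem_image, mem_univ, true_and, Prod.exists, y, Function.comp_apply]
  refine ⟨fun ⟨i, u, hiu⟩ => hiu ▸ (e _).2, fun ha => ?_⟩
  exact ⟨(σ.symm (e.symm ⟨a, ha⟩)).1, (σ.symm (e.symm ⟨a, ha⟩)).2, by simp⟩

/-- **No-dimensional Tverberg theorem with radius `√(2/r)·diam P`**
(Har-Peled, Robson). For integers `k ≥ 2`, `r ≥ 1` and a set `P` of `n = k·r` points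
in a real inner product space, there exist a partition of `P` into `k` nonempty
subsets and a point `c` such that the closed ball of radius `√(2/r)·diam P` centered
at `c` intersects the convex hull of every part. -/
theorem no_dimensional_tverberg_har_peled_robson
    {E : Type*} [NormedAddCommGroup E] [InnerProductSpace ℝ E] [DecidableEq E]
    (k r : ℕ) (hk : 2 ≤ k) (hr : 1 ≤ r)
    (P : Finset E) (hP : P.card = k * r) :
    ∃ Pparts : Fin k → Finset E,
      (∀ i, (Pparts i).Nonempty) ∧
      (∀ i i', i ≠ i' → Disjoint (Pparts i) (Pparts i')) ∧
      Finset.univ.biUnion Pparts = P ∧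
      ∃ c : E, ∀ i, ∃ p ∈ convexHull ℝ (↑(Pparts i) : Set E),
        dist p c ≤ Real.sqrt (2 / (r : ℝ)) * Metric.diam (↑P : Set E) :=
  no_dimensional_tverberg_har_peled_robson_general k r hr P hP
end

section
/- Let R and B be disjoint finite sets of points in a real inner product space with |R| = |B| = n ≥ 1, and let σ : R → B be a bijection that maximizes the sum ∑_{r ∈ R} ‖r − σ(r)‖² over all bijections from R to B. Then the diametral balls B(r σ(r)), r ∈ R, have a common point; in particular, for any n red and n blue points there is a perfect red-blue matching whose diametral balls intersect. -/
/-!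
Since the matching `i ↦ (a i, b i)` cannot be improved by exchanging two partners,
`⟪a i - a j, b i - b j⟫ ≤ 0` for all `i, j`. A point `c` lies in the diametral ball of `a i, b i`
iff its power `⟪a i - c, b i - c⟫` with respect to the sphere on that diameter is `≤ 0`.

For weights `l` in the standard simplex, the weighted power `∑ l i * ⟪a i - c, b i - c⟫` is
minimized at the weighted midpoint `c = ∑ l i • midpoint (a i) (b i)`, and the exchange
inequalities make this minimum `≤ 0`. Let `l` maximize the minimum over the simplex and let `c`
be its weighted midpoint. Moving `l` towards the vertex `i` changes the minimum, to first order,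
by the power of `c` with respect to the `i`-th ball minus the minimum itself; maximality makes
this nonpositive, so `c` lies in every ball.
-/

open Filter Finset RealInnerProductSpace Topology

section

variable {E : Type*} [NormedAddCommGroup E] [InnerProductSpace ℝ E]

theorem inner_sub_sub_eq_dist_midpoint_sq_sub (a b c : E) :
    ⟪a - c, b - c⟫ = dist c (midpoint ℝ a b) ^ 2 - (dist a b / 2) ^ 2 := by
  have ha : a - c = (midpoint ℝ a b - c) + (2⁻¹ : ℝ) • (a - b) := by
    rw [midpoint_eq_smul_add, invOf_eq_inv]; module
  have hb : b - c = (midpoint ℝ a b - c) - (2⁻¹ : ℝ) • (a - b) := by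
    rw [midpoint_eq_smul_add, invOf_eq_inv]; module
  rw [ha, hb, dist_comm, dist_eq_norm, dist_eq_norm]
  generalize midpoint ℝ a b - c = u
  rw [inner_add_left, inner_sub_right, inner_sub_right, real_inner_self_eq_norm_sq,
    real_inner_self_eq_norm_sq, real_inner_comm, norm_smul]
  norm_num
  ring

theorem dist_midpoint_le_iff_inner_sub_sub_nonpos (a b c : E) :
    dist c (midpoint ℝ a b) ≤ dist a b / 2 ↔ ⟪a - c, b - c⟫ ≤ 0 := by
  rw [inner_sub_sub_eq_dist_midpoint_sq_sub, sub_nonpos,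
    sq_le_sq₀ dist_nonneg (by positivity)]

theorem sum_norm_sub_swap_sq {ι : Type*} [Fintype ι] [DecidableEq ι] (a b : ι → E) (i j : ι) :
    ∑ k, ‖a k - b (Equiv.swap i j k)‖ ^ 2 = ∑ k, ‖a k - b k‖ ^ 2 + 2 * ⟪a i - a j, b i - b j⟫ := by
  rcases eq_or_ne i j with rfl | hij
  · simp
  rw [← sub_eq_iff_eq_add', ← sum_sub_distrib,
    sum_eq_add_of_mem i j (mem_univ i) (mem_univ j) hij fun k _ hk => by
      rw [Equiv.swap_apply_of_ne_of_ne hk.1 hk.2, sub_self]]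
  simp only [Equiv.swap_apply_left, Equiv.swap_apply_right, norm_sub_sq_real, inner_sub_left,
    inner_sub_right]
  ring

theorem sum_sum_mul_inner_sub_sub {ι : Type*} [Fintype ι] (l : ι → ℝ) (a b : ι → E) :
    ∑ i, ∑ j, l i * l j * ⟪a i - a j, b i - b j⟫ =
      2 * ((∑ i, l i) * ∑ i, l i * ⟪a i, b i⟫ - ⟪∑ i, l i • a i, ∑ i, l i • b i⟫) := by
  set g : ι → ι → ℝ := fun i j => l i * l j * (⟪a i, b i⟫ - ⟪a j, b i⟫)
  have hsymm : ∑ i, ∑ j, g j i = ∑ i, ∑ j, g i j := sum_comm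
  calc ∑ i, ∑ j, l i * l j * ⟪a i - a j, b i - b j⟫ = ∑ i, ∑ j, (g i j + g j i) := by
        refine sum_congr rfl fun i _ => sum_congr rfl fun j _ => ?_
        simp only [g, inner_sub_left, inner_sub_right]
        ring
    _ = 2 * ∑ i, ∑ j, g i j := by simp only [sum_add_distrib, hsymm]; ring
    _ = _ := by
        congr 1
        rw [mul_comm (∑ i, l i), sum_mul_sum, inner_sum]
        simp_rw [real_inner_smul_right, sum_inner, real_inner_smul_left, mul_sum,
          ← sum_sub_distrib]
        exact sum_congr rfl fun i _ => sum_congr rfl fun j _ => by ring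

theorem nonpos_of_forall_le_mul {x K : ℝ} (h : ∀ t ∈ Set.Ioc (0 : ℝ) 1, x ≤ t * K) : x ≤ 0 := by
  have hlim : Tendsto (fun t : ℝ => t * K) (𝓝[>] 0) (𝓝 0) := by
    have : Continuous fun t : ℝ => t * K := by fun_prop
    exact (this.tendsto' 0 0 (zero_mul K)).mono_left nhdsWithin_le_nhds
  exact ge_of_tendsto hlim (eventually_of_mem (Ioc_mem_nhdsGT zero_lt_one) h)

section Weighted

variable {ι : Type*} [Fintype ι] (a b : ι → E)

noncomputable def weightedPower (l : ι → ℝ) (c : E) : ℝ := ∑ i, l i * ⟪a i - c, b i - c⟫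

noncomputable def weightedMidpoint (l : ι → ℝ) : E := ∑ i, l i • midpoint ℝ (a i) (b i)

noncomputable def minWeightedPower (l : ι → ℝ) : ℝ := weightedPower a b l (weightedMidpoint a b l)

variable {a b}

theorem weightedMidpoint_eq (l : ι → ℝ) :
    weightedMidpoint a b l = (2⁻¹ : ℝ) • (∑ i, l i • a i + ∑ i, l i • b i) := by
  simp only [weightedMidpoint, midpoint_eq_smul_add, invOf_eq_inv, smul_sum, ← sum_add_distrib,
    smul_add, smul_comm (l _)]

theorem weightedPower_eq {l : ι → ℝ} (hl : ∑ i, l i = 1) (c : E) :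
    weightedPower a b l c =
      ∑ i, l i * ⟪a i, b i⟫ - ‖weightedMidpoint a b l‖ ^ 2 + ‖c - weightedMidpoint a b l‖ ^ 2 := by
  have hterm : ∀ i, ⟪a i - c, b i - c⟫ =
      ⟪a i, b i⟫ - 2 * ⟪midpoint ℝ (a i) (b i), c⟫ + ‖c‖ ^ 2 := fun i => by
    rw [midpoint_eq_smul_add, invOf_eq_inv, real_inner_smul_left, inner_sub_left, inner_sub_right,
      inner_sub_right, inner_add_left, real_inner_self_eq_norm_sq, real_inner_comm c (a i),
      real_inner_comm c (b i)]
    ring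
  have hcross : ⟪weightedMidpoint a b l, c⟫ = ∑ i, l i * ⟪midpoint ℝ (a i) (b i), c⟫ := by
    simp only [weightedMidpoint, sum_inner, real_inner_smul_left]
  rw [norm_sub_sq_real, real_inner_comm, hcross, weightedPower]
  simp only [hterm, mul_add, mul_sub, sum_add_distrib, sum_sub_distrib, ← sum_mul, hl, mul_sum]
  ring_nf

theorem minWeightedPower_eq {l : ι → ℝ} (hl : ∑ i, l i = 1) :
    minWeightedPower a b l = ∑ i, l i * ⟪a i, b i⟫ - ‖weightedMidpoint a b l‖ ^ 2 := by
  rw [minWeightedPower, weightedPower_eq hl, sub_self, norm_zero]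
  ring

theorem weightedPower_eq_minWeightedPower_add {l : ι → ℝ} (hl : ∑ i, l i = 1) (c : E) :
    weightedPower a b l c = minWeightedPower a b l + ‖c - weightedMidpoint a b l‖ ^ 2 := by
  rw [weightedPower_eq hl, minWeightedPower_eq hl]

theorem minWeightedPower_nonpos (hab : ∀ i j, ⟪a i - a j, b i - b j⟫ ≤ 0) {l : ι → ℝ}
    (hl : l ∈ stdSimplex ℝ ι) : minWeightedPower a b l ≤ 0 := by
  set A := ∑ i, l i • a i
  set B := ∑ i, l i • b i
  have hmix : ∑ i, l i * ⟪a i, b i⟫ ≤ ⟪A, B⟫ := by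
    have hpairs : ∑ i, ∑ j, l i * l j * ⟪a i - a j, b i - b j⟫ ≤ 0 :=
      sum_nonpos fun i _ => sum_nonpos fun j _ =>
        mul_nonpos_of_nonneg_of_nonpos (mul_nonneg (hl.1 i) (hl.1 j)) (hab i j)
    rw [sum_sum_mul_inner_sub_sub, hl.2, one_mul] at hpairs
    linarith
  have hmid : ‖weightedMidpoint a b l‖ ^ 2 = ⟪A, B⟫ + ‖A - B‖ ^ 2 / 4 := by
    rw [weightedMidpoint_eq, norm_smul, mul_pow, norm_add_sq_real, norm_sub_sq_real]
    norm_num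
    ring
  rw [minWeightedPower_eq hl.2, hmid]
  linarith [sq_nonneg ‖A - B‖]

theorem minWeightedPower_convexCombination_single [DecidableEq ι] {l : ι → ℝ}
    (hl : ∑ i, l i = 1) (i : ι) (t : ℝ) :
    minWeightedPower a b ((1 - t) • l + t • Pi.single i 1) =
      (1 - t) * minWeightedPower a b l
        + t * ⟪a i - weightedMidpoint a b l, b i - weightedMidpoint a b l⟫
        - t ^ 2 * ‖weightedMidpoint a b l - midpoint ℝ (a i) (b i)‖ ^ 2 := by
  set l' := (1 - t) • l + t • Pi.single i (1 : ℝ)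
  set c := weightedMidpoint a b l
  have hl' : ∑ j, l' j = 1 := by
    simp [l', sum_add_distrib, ← mul_sum, hl]
  have hM : weightedMidpoint a b l' = (1 - t) • c + t • midpoint ℝ (a i) (b i) := by
    simp [l', c, weightedMidpoint, add_smul, mul_smul, sum_add_distrib, ← smul_sum, Pi.single_apply]
  have hF : weightedPower a b l' c =
      (1 - t) * minWeightedPower a b l + t * ⟪a i - c, b i - c⟫ := by
    simp [l', c, minWeightedPower, weightedPower, add_mul, mul_assoc, sum_add_distrib, ← mul_sum,
      Pi.single_apply]
  have hshift : c - weightedMidpoint a b l' = t • (c - midpoint ℝ (a i) (b i)) := by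
    rw [hM]; module
  rw [← sub_eq_of_eq_add (weightedPower_eq_minWeightedPower_add hl' c), hF, hshift, norm_smul,
    mul_pow, Real.norm_eq_abs, sq_abs]

theorem continuous_minWeightedPower : Continuous (minWeightedPower a b) := by
  unfold minWeightedPower weightedPower weightedMidpoint
  fun_prop

end Weighted

theorem exists_forall_inner_sub_sub_nonpos {ι : Type*} [Finite ι] {a b : ι → E}
    (hab : ∀ i j, ⟪a i - a j, b i - b j⟫ ≤ 0) : ∃ c : E, ∀ i, ⟪a i - c, b i - c⟫ ≤ 0 := by
  classical
  cases nonempty_fintype ι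
  rcases isEmpty_or_nonempty ι with _ | _
  · exact ⟨0, isEmptyElim⟩
  obtain ⟨l, hl, hlmax⟩ := (isCompact_stdSimplex ℝ ι).exists_isMaxOn
    ⟨_, single_mem_stdSimplex ℝ (Classical.arbitrary ι)⟩
    (continuous_minWeightedPower (a := a) (b := b)).continuousOn
  refine ⟨weightedMidpoint a b l, fun i => ?_⟩
  have hdir : ∀ t ∈ Set.Ioc (0 : ℝ) 1,
      ⟪a i - weightedMidpoint a b l, b i - weightedMidpoint a b l⟫ - minWeightedPower a b l ≤
        t * ‖weightedMidpoint a b l - midpoint ℝ (a i) (b i)‖ ^ 2 := by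
    rintro t ⟨ht0, ht1⟩
    have hle := hlmax (convex_stdSimplex ℝ ι hl (single_mem_stdSimplex ℝ i) (sub_nonneg.2 ht1)
      ht0.le (sub_add_cancel 1 t))
    rw [Set.mem_ofPred_eq, minWeightedPower_convexCombination_single hl.2] at hle
    refine le_of_mul_le_mul_left ?_ ht0
    linarith
  linarith [nonpos_of_forall_le_mul hdir, minWeightedPower_nonpos hab hl]

end

theorem red_blue_tverberg_matching_general
    {E : Type*} [NormedAddCommGroup E] [InnerProductSpace ℝ E]
    (n : ℕ) (a b : Fin n → E)
    (hmax : ∀ π : Equiv.Perm (Fin n),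
      ∑ i, ‖a i - b (π i)‖ ^ 2 ≤ ∑ i, ‖a i - b i‖ ^ 2) :
    ∃ c : E, ∀ i, dist c (midpoint ℝ (a i) (b i)) ≤ dist (a i) (b i) / 2 := by
  have hswap : ∀ i j, ⟪a i - a j, b i - b j⟫ ≤ 0 := fun i j => by
    have := hmax (Equiv.swap i j)
    rw [sum_norm_sub_swap_sq] at this
    linarith
  obtain ⟨c, hc⟩ := exists_forall_inner_sub_sub_nonpos hswap
  exact ⟨c, fun i => (dist_midpoint_le_iff_inner_sub_sub_nonpos _ _ _).2 (hc i)⟩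

/-- **Red-blue Tverberg matchings** (Huemer et al.; Pirahmad, Polyanskii, Vasilevskii).
Let `a 0, …, a (n-1)` be `n` red points and `b 0, …, b (n-1)` be `n` blue points (all
distinct) in a real inner product space, and suppose the red-blue matching pairing
`a i` with `b i` maximizes the sum of squared distances between matched points over
all red-blue matchings (i.e., over all permutations of the blue points). Then the
diametral balls `B(a i, b i)` have a common point `c`: a point whose distance to each
midpoint `(a i + b i)/2` is at most `‖a i − b i‖/2`. -/
theorem red_blue_tverberg_matching
    {E : Type*} [NormedAddCommGroup E] [InnerProductSpace ℝ E]
    (n : ℕ) (hn : 1 ≤ n) (a b : Fin n → E)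
    (ha : Function.Injective a) (hb : Function.Injective b)
    (hab : ∀ i j, a i ≠ b j)
    (hmax : ∀ π : Equiv.Perm (Fin n),
      ∑ i, ‖a i - b (π i)‖ ^ 2 ≤ ∑ i, ‖a i - b i‖ ^ 2) :
    ∃ c : E, ∀ i, dist c (midpoint ℝ (a i) (b i)) ≤ dist (a i) (b i) / 2 :=
  red_blue_tverberg_matching_general n a b hmax
end

section
/- For any set of 2n points in the Euclidean plane, there exist a perfect matching M and a point z in the plane such that for every pair {x, y} ∈ M, either z ∈ {x, y} or the angle ∠xzy is at least 2π/3. -/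
/-!
Project the points onto every direction `t` and let `m t` be a median of the projections, chosen
continuous in `t` with `m (t + π) = -m t`. Since `u t - u (t + π/3) + u (t + 2π/3) = 0` for the
unit vectors `u`, a zero of the antiperiodic function `m t - m (t + π/3) + m (t + 2π/3)` (which
exists by the intermediate value theorem) yields three concurrent median lines through a point `z`,
at mutual angles `π/3`. Each of the six open half-planes they bound contains at most `n` points, and
every closed arc of directions seen from `z` shorter than `2π/3` lies in one of them. Sorting the
points by their direction from `z` and matching the `i`-th with the `(i + n)`-th therefore gives
angles of at least `2π/3` at `z`. If `z` is one of the points, that point is given a direction away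
from every arc that already carries `n` of the others.
-/

open Finset Real Function

theorem Real.Angle.coe_ne_coe_of_lt_of_lt_add_two_pi {s t : ℝ} (h₁ : s < t)
    (h₂ : t < s + 2 * π) : (t : Real.Angle) ≠ s := by
  rw [Ne, Real.Angle.angle_eq_iff_two_pi_dvd_sub]
  rintro ⟨k, hk⟩
  have hk₀ : (0 : ℝ) < k := by nlinarith [pi_pos]
  have hk₁ : (k : ℝ) < 1 := by nlinarith [pi_pos]
  have : (0 : ℤ) < k := by exact_mod_cast hk₀
  have : k < (1 : ℤ) := by exact_mod_cast hk₁
  omega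

namespace FeketeMeijer

section Median

variable {ι : Type*} [Fintype ι] {n : ℕ}

/-- The `(n+1)`-st smallest value of `f`, counted with multiplicity. -/
noncomputable def orderStat (hn : n < Fintype.card ι) (f : ι → ℝ) : ℝ :=
  (univ : Finset (Fin (n + 1) ↪ ι)).inf'
    (univ_nonempty_iff.2 (Function.Embedding.nonempty_of_card_le (by simpa)))
    fun e => univ.sup' univ_nonempty fun k => f (e k)

theorem continuous_orderStat (hn : n < Fintype.card ι) : Continuous (orderStat (ι := ι) hn) :=
  Continuous.finset_inf'_apply _ fun _ _ =>
    Continuous.finset_sup'_apply _ fun _ _ => continuous_apply _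

theorem card_le_of_forall_lt_orderStat (hn : n < Fintype.card ι) {f : ι → ℝ} {S : Finset ι}
    (hS : ∀ i ∈ S, f i < orderStat hn f) : #S ≤ n := by
  by_contra! hcard
  obtain ⟨T, hTS, hT⟩ := exists_subset_card_eq (Nat.succ_le_of_lt hcard)
  let e : Fin (n + 1) ↪ ι := (T.equivFinOfCardEq hT).symm.toEmbedding.trans (.subtype _)
  have he : ∀ k, e k ∈ S := fun k => hTS (T.equivFinOfCardEq hT |>.symm k).2
  have hle : orderStat hn f ≤ univ.sup' univ_nonempty fun k => f (e k) := inf'_le _ (mem_univ e)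
  have hlt : (univ.sup' univ_nonempty fun k => f (e k)) < orderStat hn f :=
    (sup'_lt_iff _).2 fun k _ => hS _ (he k)
  exact hle.not_gt hlt

theorem orderStat_add_orderStat_neg_nonneg (hn : n < Fintype.card ι)
    (hcard : Fintype.card ι ≤ 2 * n + 1) (f : ι → ℝ) :
    0 ≤ orderStat hn f + orderStat hn (-f) := by
  classical
  rw [← neg_le_iff_add_nonneg']
  refine le_inf' _ _ fun e _ => neg_le.2 (le_inf' _ _ fun e' _ => ?_)
  obtain ⟨i, hi, hi'⟩ : ∃ i ∈ univ.map e, i ∈ univ.map e' := by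
    refine not_disjoint_iff.1 fun hdisj => ?_
    have := card_le_univ (univ.map e ∪ univ.map e')
    rw [card_union_of_disjoint hdisj] at this
    simp only [card_map, card_univ, Fintype.card_fin] at this
    omega
  obtain ⟨k, -, rfl⟩ := mem_map.1 hi
  obtain ⟨k', -, hk'⟩ := mem_map.1 hi'
  calc -univ.sup' univ_nonempty (fun k => (-f) (e k)) ≤ -(-f) (e k) :=
        neg_le_neg (le_sup' (fun k => (-f) (e k)) (mem_univ k))
    _ = f (e' k') := by rw [← hk', Pi.neg_apply, neg_neg]
    _ ≤ _ := le_sup' (fun k => f (e' k)) (mem_univ k')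

-- `-orderStat hn (-f)` is the `(n+1)`-st largest value; averaging makes the median odd in `f`.
noncomputable def median (hn : n < Fintype.card ι) (f : ι → ℝ) : ℝ :=
  (orderStat hn f - orderStat hn (-f)) / 2

theorem continuous_median (hn : n < Fintype.card ι) : Continuous (median (ι := ι) hn) := by
  have := continuous_orderStat (ι := ι) hn
  unfold median
  fun_prop

theorem median_neg (hn : n < Fintype.card ι) (f : ι → ℝ) : median hn (-f) = -median hn f := by
  simp only [median, neg_neg]
  ring

theorem card_le_of_forall_median_lt (hn : n < Fintype.card ι) (hcard : Fintype.card ι ≤ 2 * n + 1)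
    {f : ι → ℝ} {S : Finset ι} (hS : ∀ i ∈ S, median hn f < f i) : #S ≤ n := by
  refine card_le_of_forall_lt_orderStat hn (f := -f) fun i hi => ?_
  have hsum := orderStat_add_orderStat_neg_nonneg hn hcard f
  have hlt := hS i hi
  rw [median] at hlt
  rw [Pi.neg_apply]
  linarith

end Median

theorem exists_eq_zero_of_antiperiodic {g : ℝ → ℝ} {c : ℝ} (hg : Continuous g)
    (h : Antiperiodic g c) : ∃ t, g t = 0 := by
  have h0 : (0 : ℝ) ∈ Set.uIcc (g 0) (g c) := by
    rw [← zero_add c, h 0, Set.mem_uIcc]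
    rcases le_total (g 0) 0 with hg₀ | hg₀
    · exact Or.inl ⟨hg₀, by linarith⟩
    · exact Or.inr ⟨by linarith, hg₀⟩
  obtain ⟨t, -, ht⟩ := intermediate_value_uIcc hg.continuousOn h0
  exact ⟨t, ht⟩

theorem exists_add_int_mul_mem_Ioo {c : ℝ} (hc : 0 < c) (t₀ : ℝ) {a b : ℝ} (h : a + c < b) :
    ∃ k : ℤ, t₀ + k * c ∈ Set.Ioo a b := by
  refine ⟨-toIocDiv hc a t₀, ?_⟩
  have hmem := toIocMod_mem_Ioc hc a t₀
  rw [← self_sub_toIocDiv_zsmul, zsmul_eq_mul] at hmem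
  push_cast
  exact ⟨by linarith [hmem.1], by linarith [hmem.2]⟩

noncomputable def proj (s : ℝ) (w : ℂ) : ℝ := w.re * cos s + w.im * sin s

theorem continuous_proj (w : ℂ) : Continuous fun s => proj s w := by
  unfold proj; fun_prop

theorem proj_add_pi (s : ℝ) (w : ℂ) : proj (s + π) w = -proj s w := by
  simp only [proj, cos_add_pi, sin_add_pi]; ring

theorem proj_sub (s : ℝ) (w z : ℂ) : proj s (w - z) = proj s w - proj s z := by
  simp only [proj, Complex.sub_re, Complex.sub_im]; ring

theorem proj_eq_norm_mul_cos (s : ℝ) (w : ℂ) : proj s w = ‖w‖ * cos (w.arg - s) := by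
  rw [proj, cos_sub, ← Complex.norm_mul_cos_arg, ← Complex.norm_mul_sin_arg]; ring

theorem proj_sub_proj_add_proj (s : ℝ) (w : ℂ) :
    proj s w - proj (s + π / 3) w + proj (s + 2 * π / 3) w = 0 := by
  have h2 : s + 2 * π / 3 = s + π / 3 + π / 3 := by ring
  simp only [proj, h2, cos_add, sin_add, cos_pi_div_three, sin_pi_div_three]
  linear_combination (-(w.re * cos s + w.im * sin s) / 4) * sq_sqrt (zero_le_three (α := ℝ))

theorem exists_proj_eq_proj_eq (s a b : ℝ) :
    ∃ z : ℂ, proj s z = a ∧ proj (s + π / 3) z = b := by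
  have hcos : cos (s + π / 3) * cos s + sin (s + π / 3) * sin s = 1 / 2 := by
    rw [← cos_sub, add_sub_cancel_left, cos_pi_div_three]
  set A := (4 * a - 2 * b) / 3
  set B := (4 * b - 2 * a) / 3
  refine ⟨⟨A * cos s + B * cos (s + π / 3), A * sin s + B * sin (s + π / 3)⟩, ?_, ?_⟩
  · simp only [proj]
    linear_combination A * sin_sq_add_cos_sq s + B * hcos
  · simp only [proj]
    linear_combination B * sin_sq_add_cos_sq (s + π / 3) + A * hcos

theorem eq_zero_of_antiperiodic_of_eq_zero {d : ℝ → ℝ} {c t₀ : ℝ} (hd : Antiperiodic d c)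
    (h₀ : d t₀ = 0) (h₁ : d (t₀ + c / 3) = 0) (h₂ : d (t₀ + 2 * c / 3) = 0) (k : ℤ) :
    d (t₀ + k * (c / 3)) = 0 := by
  have hr : d (t₀ + (k % 3 : ℤ) * (c / 3)) = 0 := by
    have : k % 3 = 0 ∨ k % 3 = 1 ∨ k % 3 = 2 := by omega
    rcases this with hk | hk | hk <;> rw [hk]
    · simpa using h₀
    · simpa using h₁
    · rw [show t₀ + ((2 : ℤ) : ℝ) * (c / 3) = t₀ + 2 * c / 3 by push_cast; ring]
      exact h₂
  have hsplit : ((k / 3 : ℤ) : ℝ) * c + (t₀ + (k % 3 : ℤ) * (c / 3)) = t₀ + k * (c / 3) := by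
    have hk3 : ((3 * (k / 3) + k % 3 : ℤ) : ℝ) = k := congrArg _ (Int.mul_ediv_add_emod k 3)
    push_cast at hk3
    linear_combination (c / 3) * hk3
  simpa only [hsplit] using
    (hd.add_const (t₀ + (k % 3 : ℤ) * (c / 3))).int_mul_eq_of_eq_zero (by simpa using hr) (k / 3)

theorem exists_proj_eq_of_antiperiodic {m : ℝ → ℝ} (hm : Continuous m) (hanti : Antiperiodic m π) :
    ∃ (z : ℂ) (t₀ : ℝ), ∀ k : ℤ, proj (t₀ + k * (π / 3)) z = m (t₀ + k * (π / 3)) := by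
  let g t := m t - m (t + π / 3) + m (t + 2 * π / 3)
  have hg : Antiperiodic g π := fun t => by
    simp only [g]
    rw [add_right_comm t π, add_right_comm t π, hanti, hanti, hanti]
    ring
  obtain ⟨t₀, hgt₀⟩ := exists_eq_zero_of_antiperiodic (by fun_prop) hg
  obtain ⟨z, h₀, h₁⟩ := exists_proj_eq_proj_eq t₀ (m t₀) (m (t₀ + π / 3))
  have h₂ : proj (t₀ + 2 * π / 3) z = m (t₀ + 2 * π / 3) := by
    linarith [proj_sub_proj_add_proj t₀ z, show g t₀ = 0 from hgt₀]
  let d t := proj t z - m t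
  have hd : Antiperiodic d π := fun t => by
    simp only [d, proj_add_pi, hanti t]
    ring
  refine ⟨z, t₀, fun k => sub_eq_zero.1 ?_⟩
  exact eq_zero_of_antiperiodic_of_eq_zero hd (sub_eq_zero.2 h₀) (sub_eq_zero.2 h₁)
    (sub_eq_zero.2 h₂) k

def SparseHalfPlanes {ι : Type*} (n : ℕ) (p : ι → ℂ) (z : ℂ) (t₀ : ℝ) : Prop :=
  ∀ (k : ℤ) (S : Finset ι), (∀ i ∈ S, 0 < proj (t₀ + k * (π / 3)) (p i - z)) → #S ≤ n

theorem exists_center {ι : Type*} [Fintype ι] {n : ℕ} (p : ι → ℂ)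
    (hcard : Fintype.card ι ≤ 2 * n + 1) :
    ∃ (z : ℂ) (t₀ : ℝ), SparseHalfPlanes n p z t₀ := by
  obtain hn | hn := le_or_gt (Fintype.card ι) n
  · exact ⟨0, 0, fun _ S _ => (card_le_univ S).trans hn⟩
  let m t := median hn fun i => proj t (p i)
  have hm : Continuous m :=
    (continuous_median hn).comp (continuous_pi fun i => continuous_proj (p i))
  have hanti : Antiperiodic m π := fun t => by
    simp only [m, proj_add_pi]
    exact median_neg hn _
  obtain ⟨z, t₀, hz⟩ := exists_proj_eq_of_antiperiodic hm hanti
  refine ⟨z, t₀, fun k S hS => card_le_of_forall_median_lt hn hcard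
    (f := fun i => proj (t₀ + k * (π / 3)) (p i)) fun i hi => ?_⟩
  have := hS i hi
  rw [proj_sub, hz k] at this
  linarith

def arc (x L : ℝ) : Set Real.Angle := (↑) '' Set.Icc x (x + L)

theorem arc_mono {x L L' : ℝ} (h : L ≤ L') : arc x L ⊆ arc x L' :=
  Set.image_mono (Set.Icc_subset_Icc_right (by linarith))

theorem cos_pos_of_mem_arc {θ : Real.Angle} {x L s : ℝ} (hθ : θ ∈ arc x L)
    (hs : s ∈ Set.Ioo (x + L - π / 2) (x + π / 2)) : 0 < Real.Angle.cos (θ - s) := by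
  obtain ⟨t, ht, rfl⟩ := hθ
  rw [← Real.Angle.coe_sub, Real.Angle.cos_coe]
  exact cos_pos_of_mem_Ioo ⟨by linarith [ht.1, hs.2], by linarith [ht.2, hs.1]⟩

theorem disjoint_arc_of_mem_arc {x L x₀ : ℝ} (hL : L < 2 * π / 3)
    (hx₀ : ((x₀ + 4 * π / 3 : ℝ) : Real.Angle) ∈ arc x L) :
    Disjoint (arc x L) (arc x₀ (2 * π / 3)) := by
  rw [Set.disjoint_left]
  rintro _ ⟨t, ht, rfl⟩ ⟨t', ht', htt'⟩
  obtain ⟨s, hs, hsx₀⟩ := hx₀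
  have hu : ((t - s + (x₀ + 4 * π / 3) : ℝ) : Real.Angle) = t' := by
    rw [Real.Angle.coe_add, Real.Angle.coe_sub, ← hsx₀, sub_add_cancel, htt']
  exact Real.Angle.coe_ne_coe_of_lt_of_lt_add_two_pi
    (by linarith [ht.1, ht.2, hs.1, hs.2, ht'.2]) (by linarith [ht.1, ht.2, hs.1, hs.2, ht'.1]) hu

section Arcs

variable {ι : Type*} {n : ℕ}

def ArcSparse (n : ℕ) (θ : ι → Real.Angle) : Prop :=
  ∀ x L : ℝ, L < 2 * π / 3 → ∀ S : Finset ι, (∀ i ∈ S, θ i ∈ arc x L) → #S ≤ n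

theorem card_le_of_forall_mem_arc {p : ι → ℂ} {z : ℂ} {t₀ : ℝ}
    (hz : SparseHalfPlanes n p z t₀)
    {x L : ℝ} (hL : L < 2 * π / 3) {S : Finset ι}
    (hS : ∀ i ∈ S, p i ≠ z ∧ ((p i - z).arg : Real.Angle) ∈ arc x L) : #S ≤ n := by
  obtain ⟨k, hk⟩ := exists_add_int_mul_mem_Ioo (by positivity : 0 < π / 3) t₀
    (a := x + L - π / 2) (b := x + π / 2) (by linarith)
  refine hz k S fun i hi => ?_
  rw [proj_eq_norm_mul_cos]
  refine mul_pos (norm_pos_iff.2 (sub_ne_zero.2 (hS i hi).1)) ?_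
  simpa only [← Real.Angle.coe_sub, Real.Angle.cos_coe] using cos_pos_of_mem_arc (hS i hi).2 hk

theorem exists_angle_card_lt_of_mem_arc [Fintype ι] (θ : ι → Real.Angle) (j : ι)
    (hcard : Fintype.card ι ≤ 2 * n) :
    ∃ ψ : Real.Angle, ∀ x L : ℝ, L < 2 * π / 3 → ψ ∈ arc x L →
      ∀ S : Finset ι, (∀ i ∈ S, i ≠ j ∧ θ i ∈ arc x L) → #S < n := by
  classical
  by_cases hheavy : ∃ (x₀ : ℝ) (T : Finset ι), (∀ i ∈ T, i ≠ j ∧ θ i ∈ arc x₀ (2 * π / 3)) ∧ n ≤ #T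
  · obtain ⟨x₀, T, hT, hTn⟩ := hheavy
    -- opposite the midpoint of the heavy arc: every short arc through `ψ` misses the heavy arc
    refine ⟨(x₀ + 4 * π / 3 : ℝ), fun x L hL hψ S hS => ?_⟩
    have hdisj : Disjoint S T := disjoint_left.2 fun i hiS hiT =>
      Set.disjoint_left.1 (disjoint_arc_of_mem_arc hL hψ) (hS i hiS).2 (hT i hiT).2
    have hsub : S ∪ T ⊆ univ.erase j := fun i hi => by
      rcases mem_union.1 hi with hi | hi
      exacts [mem_erase.2 ⟨(hS i hi).1, mem_univ i⟩, mem_erase.2 ⟨(hT i hi).1, mem_univ i⟩]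
    have := card_le_card hsub
    rw [card_union_of_disjoint hdisj, card_erase_of_mem (mem_univ j), card_univ] at this
    have := Fintype.card_pos_iff.2 ⟨j⟩
    omega
  · push Not at hheavy
    exact ⟨0, fun x L hL _ S hS =>
      hheavy x S fun i hi => ⟨(hS i hi).1, arc_mono hL.le (hS i hi).2⟩⟩

theorem exists_update_arcSparse [Fintype ι] [DecidableEq ι] (θ : ι → Real.Angle) (j : ι)
    (hcard : Fintype.card ι ≤ 2 * n)
    (hθ : ∀ x L : ℝ, L < 2 * π / 3 → ∀ S : Finset ι, (∀ i ∈ S, i ≠ j ∧ θ i ∈ arc x L) → #S ≤ n) :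
    ∃ ψ, ArcSparse n (update θ j ψ) := by
  obtain ⟨ψ, hψ⟩ := exists_angle_card_lt_of_mem_arc θ j hcard
  refine ⟨ψ, fun x L hL S hS => ?_⟩
  by_cases hjS : j ∈ S
  · have := hψ x L hL (by simpa using hS j hjS) (S.erase j) fun i hi => by
      have hij := ne_of_mem_erase hi
      simpa [hij] using hS i (mem_of_mem_erase hi)
    rw [card_erase_of_mem hjS] at this
    omega
  · exact hθ x L hL S fun i hi => by
      have hij : i ≠ j := fun h => hjS (h ▸ hi)
      simpa [hij] using hS i hi

theorem exists_arcSparse_of_center [Fintype ι] [DecidableEq ι] {p : ι → ℂ} (hp : Injective p)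
    (hcard : Fintype.card ι ≤ 2 * n) {z : ℂ} {t₀ : ℝ}
    (hz : SparseHalfPlanes n p z t₀) :
    ∃ θ : ι → Real.Angle, ArcSparse n θ ∧ ∀ i, p i ≠ z → θ i = (p i - z).arg := by
  by_cases hj : ∃ j, p j = z
  · obtain ⟨j, rfl⟩ := hj
    obtain ⟨ψ, hψ⟩ := exists_update_arcSparse (fun i => ((p i - p j).arg : Real.Angle)) j hcard
      fun x L hL S hS =>
        card_le_of_forall_mem_arc hz hL fun i hi => ⟨hp.ne (hS i hi).1, (hS i hi).2⟩
    exact ⟨_, hψ, fun i hi => update_of_ne (fun h => hi (congrArg p h)) _ _⟩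
  · push Not at hj
    exact ⟨_, fun x L hL S hS => card_le_of_forall_mem_arc hz hL fun i hi => ⟨hj i, hS i hi⟩,
      fun _ _ => rfl⟩

end Arcs

section Matching

variable {n : ℕ}

def antipode (a : Fin (2 * n)) : Fin (2 * n) :=
  ⟨if (a : ℕ) < n then a + n else a - n, by split_ifs <;> omega⟩

theorem antipode_antipode (a : Fin (2 * n)) : antipode (antipode a) = a := by
  ext; simp only [antipode]; split_ifs <;> omega

theorem antipode_ne (a : Fin (2 * n)) : antipode a ≠ a := by
  intro h
  have := congrArg Fin.val h
  simp only [antipode] at this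
  split_ifs at this <;> omega

theorem cos_le_neg_half {d : ℝ} (h₁ : 2 * π / 3 ≤ d) (h₂ : d ≤ 4 * π / 3) : cos d ≤ -(1 / 2) := by
  have : 1 / 2 ≤ cos (d - π) := by
    rw [← cos_abs, ← cos_pi_div_three]
    exact cos_le_cos_of_nonneg_of_le_pi (abs_nonneg _) (by linarith [pi_pos])
      (abs_le.2 ⟨by linarith, by linarith⟩)
  rw [← sub_add_cancel d π, cos_add_pi]
  linarith

theorem cos_antipode_sub_le_of_arcSparse {θ : Fin (2 * n) → Real.Angle} (hθ : ArcSparse n θ)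
    {σ : Equiv.Perm (Fin (2 * n))} (hσ : Monotone fun a => (θ (σ a)).toReal) {a : Fin (2 * n)}
    (ha : (a : ℕ) < n) : Real.Angle.cos (θ (σ (antipode a)) - θ (σ a)) ≤ -(1 / 2) := by
  set b := antipode a
  have hb : (b : ℕ) = a + n := if_pos ha
  have hab : a ≤ b := Fin.le_def.2 (by omega)
  set α := (θ (σ a)).toReal
  set β := (θ (σ b)).toReal
  have hα := Real.Angle.neg_pi_lt_toReal (θ (σ a))
  have hβ := Real.Angle.toReal_le_pi (θ (σ b))
  have hαβ : α ≤ β := hσ hab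
  have hlow : 2 * π / 3 ≤ β - α := by
    by_contra! hlt
    have := hθ α (β - α) hlt ((Icc a b).map σ.toEmbedding) fun i hi => by
      obtain ⟨r, hr, rfl⟩ := mem_map.1 hi
      rw [mem_Icc] at hr
      exact ⟨_, ⟨hσ hr.1, by linarith [hσ hr.2]⟩, Real.Angle.coe_toReal _⟩
    rw [card_map, Fin.card_Icc] at this
    omega
  have hhigh : β - α ≤ 4 * π / 3 := by
    by_contra! hlt
    have := hθ β (2 * π - (β - α)) (by linarith) ((Ioo a b)ᶜ.map σ.toEmbedding) fun i hi => by
      obtain ⟨r, hr, rfl⟩ := mem_map.1 hi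
      simp only [mem_compl, mem_Ioo, not_and_or, not_lt] at hr
      rcases hr with hr | hr
      · refine ⟨(θ (σ r)).toReal + 2 * π, ⟨?_, ?_⟩, ?_⟩
        · linarith [Real.Angle.neg_pi_lt_toReal (θ (σ r))]
        · linarith [hσ hr]
        · rw [Real.Angle.coe_add, Real.Angle.coe_two_pi, add_zero, Real.Angle.coe_toReal]
          rfl
      · exact ⟨_, ⟨hσ hr, by linarith [Real.Angle.toReal_le_pi (θ (σ r))]⟩,
          Real.Angle.coe_toReal _⟩
    rw [card_map, card_compl, Fin.card_Ioo, Fintype.card_fin] at this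
    omega
  rw [← Real.Angle.coe_toReal (θ (σ b)), ← Real.Angle.coe_toReal (θ (σ a)),
    ← Real.Angle.coe_sub, Real.Angle.cos_coe]
  exact cos_le_neg_half hlow hhigh

theorem exists_matching_of_arcSparse {θ : Fin (2 * n) → Real.Angle} (hθ : ArcSparse n θ) :
    ∃ f : Fin (2 * n) → Fin (2 * n), (∀ i, f (f i) = i) ∧ (∀ i, f i ≠ i) ∧
      ∀ i, Real.Angle.cos (θ i - θ (f i)) ≤ -(1 / 2) := by
  let σ := Tuple.sort fun i => (θ i).toReal
  have hσ : Monotone fun a => (θ (σ a)).toReal := Tuple.monotone_sort fun i => (θ i).toReal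
  have hpair : ∀ a, Real.Angle.cos (θ (σ a) - θ (σ (antipode a))) ≤ -(1 / 2) := fun a => by
    by_cases ha : (a : ℕ) < n
    · rw [← Real.Angle.cos_neg, neg_sub]
      exact cos_antipode_sub_le_of_arcSparse hθ hσ ha
    · have := cos_antipode_sub_le_of_arcSparse hθ hσ (a := antipode a)
        (by simp [antipode, ha]; omega)
      rwa [antipode_antipode] at this
  refine ⟨fun i => σ (antipode (σ.symm i)), fun i => by simp [antipode_antipode],
    fun i h => antipode_ne (σ.symm i) (σ.injective (by simpa using h)), fun i => ?_⟩
  simpa using hpair (σ.symm i)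

end Matching

theorem two_pi_div_three_le_angle {x y : ℂ} (hx : x ≠ 0) (hy : y ≠ 0)
    (h : Real.Angle.cos (x.arg - y.arg) ≤ -(1 / 2)) :
    2 * π / 3 ≤ InnerProductGeometry.angle x y := by
  rw [← Complex.arg_div_coe_angle hx hy, Real.Angle.cos_coe, ← cos_abs] at h
  rw [Complex.angle_eq_abs_arg hx hy]
  by_contra! hlt
  have : cos (2 * π / 3) < cos |(x / y).arg| :=
    cos_lt_cos_of_nonneg_of_le_pi (abs_nonneg _) (by linarith [pi_pos]) hlt
  rw [show 2 * π / 3 = π - π / 3 by ring, cos_pi_sub, cos_pi_div_three] at this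
  linarith

theorem exists_matching_angle_ge {n : ℕ} (q : Fin (2 * n) → ℂ) (hq : Injective q) :
    ∃ (f : Fin (2 * n) → Fin (2 * n)) (z : ℂ), (∀ i, f (f i) = i) ∧ (∀ i, f i ≠ i) ∧
      ∀ i, z = q i ∨ z = q (f i) ∨ 2 * π / 3 ≤ EuclideanGeometry.angle (q i) z (q (f i)) := by
  obtain ⟨z, t₀, hz⟩ := exists_center (n := n) q (by simp)
  obtain ⟨θ, hθ, hθq⟩ := exists_arcSparse_of_center hq (by simp) hz
  obtain ⟨f, hff, hf, hcos⟩ := exists_matching_of_arcSparse hθ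
  refine ⟨f, z, hff, hf, fun i =>
    or_iff_not_imp_left.2 fun hi => or_iff_not_imp_left.2 fun hfi => ?_⟩
  rw [EuclideanGeometry.angle, vsub_eq_sub, vsub_eq_sub]
  refine two_pi_div_three_le_angle (sub_ne_zero.2 (Ne.symm hi)) (sub_ne_zero.2 (Ne.symm hfi)) ?_
  rw [← hθq i (Ne.symm hi), ← hθq (f i) (Ne.symm hfi)]
  exact hcos i

end FeketeMeijer

/-- **Fekete–Meijer / Dumitrescu–Pach–Tóth matching theorem.** For any `2n` distinct
points in the Euclidean plane, there exist a perfect matching (encoded by a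
fixed-point-free involution `f`, pairing `p i` with `p (f i)`) and a point `z` in the
plane such that for every matched pair, either `z` is one of the two points or the
angle `∠ (p i) z (p (f i))` is at least `2π/3`. -/
theorem fekete_meijer_matching
    (n : ℕ) (p : Fin (2 * n) → EuclideanSpace ℝ (Fin 2))
    (hp : Function.Injective p) :
    ∃ (f : Fin (2 * n) → Fin (2 * n)) (z : EuclideanSpace ℝ (Fin 2)),
      (∀ i, f (f i) = i) ∧ (∀ i, f i ≠ i) ∧
      ∀ i, z = p i ∨ z = p (f i) ∨
        2 * Real.pi / 3 ≤ EuclideanGeometry.angle (p i) z (p (f i)) := by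
  let e := Complex.orthonormalBasisOneI.repr
  obtain ⟨f, z, hff, hf, h⟩ :=
    FeketeMeijer.exists_matching_angle_ge (fun i => e.symm (p i)) (e.symm.injective.comp hp)
  refine ⟨f, e z, hff, hf, fun i => ?_⟩
  have hangle := e.toLinearIsometry.toAffineIsometry.angle_map
    (e.symm (p i)) z (e.symm (p (f i)))
  simp only [LinearIsometry.coe_toAffineIsometry, LinearIsometryEquiv.coe_toLinearIsometry,
    LinearIsometryEquiv.apply_symm_apply] at hangle
  rw [hangle, ← e.eq_symm_apply, ← e.eq_symm_apply]
  exact h i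
end

section
/- Work in the real Banach space ℓ₁ of absolutely summable real sequences, and let e_j denote its j-th standard basis vector. For integers k ≥ 2 and r ≥ 2, let Q_i = {e_{(i−1)k+1}, …, e_{ik}} for i ∈ {1,…,r}. Then for any partition {P_1, …, P_k} of Q_1 ∪ ⋯ ∪ Q_r with |P_i ∩ Q_j| = 1 for all i, j, and for any two points a ∈ conv P_i and b ∈ conv P_{i'} with i ≠ i', one has ‖a − b‖₁ = 2; consequently, since max_j diam Q_j = 2, every closed ball intersecting the convex hull of P_i for every i ∈ {1,…,k} has radius at least 1. -/
open scoped Classical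

/-!
If `a` lies in the convex hull of the basis vectors indexed by `s` and `b` in that of those
indexed by a disjoint `t`, the coordinate sums of `a` over `s` and over `t` are `1` and `0`, and
those of `b` are `0` and `1`, since these linear functionals are constant on the generators.
Hence `‖a - b‖₁ ≥ |1 - 0| + |0 - 1| = 2`, while `‖a‖₁, ‖b‖₁ ≤ 1`. The parts `P_i` are disjoint
sets of basis vectors, so points of distinct hulls are at distance `2`, and a ball of radius `R`
meeting two of them has `2 ≤ 2R`.
-/

namespace lp

variable {ι : Type*}

local notation "ℓ¹" => lp (fun _ : ι => ℝ) 1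

theorem sum_abs_apply_le_norm (x : ℓ¹) (s : Finset ι) : ∑ i ∈ s, |x i| ≤ ‖x‖ := by
  simpa [Real.norm_eq_abs] using lp.sum_rpow_le_norm_rpow (by norm_num) x s

theorem isLinearMap_sum_apply (u : Finset ι) : IsLinearMap ℝ fun x : ℓ¹ => ∑ i ∈ u, x i :=
  ⟨fun x y => by simp only [coeFn_add, Pi.add_apply, Finset.sum_add_distrib],
    fun c x => by simp only [coeFn_smul, Pi.smul_apply, smul_eq_mul, Finset.mul_sum]⟩

variable [DecidableEq ι]

local notation "e" => fun i : ι => (lp.single 1 i (1 : ℝ) : ℓ¹)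

theorem norm_le_one_of_mem_convexHull_single {s : Set ι} {x : ℓ¹}
    (hx : x ∈ convexHull ℝ (e '' s)) : ‖x‖ ≤ 1 := by
  refine mem_closedBall_zero_iff.mp (convexHull_min ?_ (convex_closedBall 0 1) hx)
  rintro _ ⟨i, -, rfl⟩
  simp

theorem sum_apply_eq_one_of_mem_convexHull_single {s : Set ι} {u : Finset ι} (hsu : s ⊆ u)
    {x : ℓ¹} (hx : x ∈ convexHull ℝ (e '' s)) : ∑ i ∈ u, x i = 1 := by
  refine convexHull_min ?_ (convex_hyperplane (isLinearMap_sum_apply u) 1) hx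
  rintro _ ⟨i, hi, rfl⟩
  simp [Pi.single_apply, Finset.mem_coe.mp (hsu hi)]

theorem sum_apply_eq_zero_of_mem_convexHull_single {s : Set ι} {u : Finset ι}
    (hsu : Disjoint s u) {x : ℓ¹} (hx : x ∈ convexHull ℝ (e '' s)) : ∑ i ∈ u, x i = 0 := by
  refine convexHull_min ?_ (convex_hyperplane (isLinearMap_sum_apply u) 0) hx
  rintro _ ⟨i, hi, rfl⟩
  simp [Pi.single_apply, Finset.mem_coe.not.mp (hsu.notMem_of_mem_left hi)]

theorem norm_sub_eq_two_of_mem_convexHull_single {s t : Finset ι} (hst : Disjoint s t) {a b : ℓ¹}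
    (ha : a ∈ convexHull ℝ (e '' s)) (hb : b ∈ convexHull ℝ (e '' t)) : ‖a - b‖ = 2 := by
  refine le_antisymm ?_ ?_
  · calc ‖a - b‖ ≤ ‖a‖ + ‖b‖ := norm_sub_le a b
      _ ≤ 1 + 1 := add_le_add (norm_le_one_of_mem_convexHull_single ha)
          (norm_le_one_of_mem_convexHull_single hb)
      _ = 2 := one_add_one_eq_two
  · have hs : ∑ i ∈ s, (a - b) i = 1 := by
      simp only [coeFn_sub, Pi.sub_apply, Finset.sum_sub_distrib,
        sum_apply_eq_one_of_mem_convexHull_single subset_rfl ha,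
        sum_apply_eq_zero_of_mem_convexHull_single (Finset.disjoint_coe.mpr hst.symm) hb, sub_zero]
    have ht : ∑ i ∈ t, (a - b) i = -1 := by
      simp only [coeFn_sub, Pi.sub_apply, Finset.sum_sub_distrib,
        sum_apply_eq_one_of_mem_convexHull_single subset_rfl hb,
        sum_apply_eq_zero_of_mem_convexHull_single (Finset.disjoint_coe.mpr hst) ha, zero_sub]
    calc (2 : ℝ) = |∑ i ∈ s, (a - b) i| + |∑ i ∈ t, (a - b) i| := by rw [hs, ht]; norm_num
      _ ≤ ∑ i ∈ s, |(a - b) i| + ∑ i ∈ t, |(a - b) i| :=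
          add_le_add (Finset.abs_sum_le_sum_abs _ _) (Finset.abs_sum_le_sum_abs _ _)
      _ = ∑ i ∈ s ∪ t, |(a - b) i| := (Finset.sum_union hst).symm
      _ ≤ ‖a - b‖ := sum_abs_apply_le_norm _ _

theorem diam_image_single {s : Set ι} (hs : s.Nontrivial) : Metric.diam (e '' s) = 2 := by
  have hdist : ∀ i j, i ≠ j → dist (e i) (e j) = 2 := fun i j hij => by
    rw [dist_eq_norm]
    exact norm_sub_eq_two_of_mem_convexHull_single (Finset.disjoint_singleton.mpr hij)
      (subset_convexHull ℝ _ (Set.mem_image_of_mem _ (Finset.mem_singleton_self i)))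
      (subset_convexHull ℝ _ (Set.mem_image_of_mem _ (Finset.mem_singleton_self j)))
  obtain ⟨i, hi, j, hj, hij⟩ := hs
  refine le_antisymm (Metric.diam_le_of_forall_dist_le zero_le_two ?_) ?_
  · rintro _ ⟨m, -, rfl⟩ _ ⟨n, -, rfl⟩
    rcases eq_or_ne m n with rfl | hmn
    · simp
    · exact (hdist m n hmn).le
  · rw [← hdist i j hij]
    refine Metric.dist_le_diam_of_mem ?_ ⟨i, hi, rfl⟩ ⟨j, hj, rfl⟩
    exact (Metric.isBounded_closedBall (x := (0 : ℓ¹)) (r := 1)).subset fun _ ⟨m, _, hm⟩ => by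
      simp [← hm]

end lp

theorem ivanov_l1_example_general
    (k r : ℕ) (hk : 2 ≤ k) (hr : 2 ≤ r)
    (Q : Fin r → Finset (lp (fun _ : ℕ => ℝ) 1))
    (hQ : ∀ i : Fin r, Q i =
      Finset.image (fun t : Fin k => lp.single 1 (i.val * k + t.val) (1 : ℝ)) Finset.univ)
    (Pparts : Fin k → Finset (lp (fun _ : ℕ => ℝ) 1))
    (hpdisj : ∀ i i', i ≠ i' → Disjoint (Pparts i) (Pparts i'))
    (hunion : Finset.univ.biUnion Pparts = Finset.univ.biUnion Q) :
    (⨆ j, Metric.diam (↑(Q j) : Set (lp (fun _ : ℕ => ℝ) 1))) = 2 ∧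
    (∀ i i', i ≠ i' →
      ∀ a ∈ convexHull ℝ (↑(Pparts i) : Set (lp (fun _ : ℕ => ℝ) 1)),
      ∀ b ∈ convexHull ℝ (↑(Pparts i') : Set (lp (fun _ : ℕ => ℝ) 1)),
        ‖a - b‖ = 2) ∧
    (∀ (c : lp (fun _ : ℕ => ℝ) 1) (R : ℝ),
      (∀ i, ∃ p ∈ convexHull ℝ (↑(Pparts i) : Set (lp (fun _ : ℕ => ℝ) 1)),
        dist p c ≤ R) → 1 ≤ R) := by
  set e : ℕ → lp (fun _ : ℕ => ℝ) 1 := fun n => lp.single 1 n 1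
  have hdiam (j : Fin r) : Metric.diam (↑(Q j) : Set (lp (fun _ : ℕ => ℝ) 1)) = 2 := by
    rw [hQ j, Finset.coe_image, Finset.coe_univ, Set.image_univ, Set.range_comp' e]
    exact lp.diam_image_single ⟨_, ⟨⟨0, by omega⟩, rfl⟩, _, ⟨⟨1, by omega⟩, rfl⟩, by simp⟩
  have hbasis (i : Fin k) : ∃ s : Finset ℕ, s.image e = Pparts i := by
    obtain ⟨s, -, hs⟩ := (Finset.subset_set_image_iff (f := e) (s := Set.univ)).mp fun x hx => by
      obtain ⟨j, -, hj⟩ := Finset.mem_biUnion.mp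
        (hunion ▸ Finset.mem_biUnion.mpr ⟨i, Finset.mem_univ _, hx⟩)
      obtain ⟨t, -, rfl⟩ := Finset.mem_image.mp (hQ j ▸ hj)
      exact ⟨_, Set.mem_univ _, rfl⟩
    exact ⟨s, hs⟩
  choose s hs using hbasis
  have hdist : ∀ i i', i ≠ i' →
      ∀ a ∈ convexHull ℝ (↑(Pparts i) : Set (lp (fun _ : ℕ => ℝ) 1)),
      ∀ b ∈ convexHull ℝ (↑(Pparts i') : Set (lp (fun _ : ℕ => ℝ) 1)), ‖a - b‖ = 2 := by
    intro i i' hii' a ha b hb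
    rw [← hs, Finset.coe_image] at ha hb
    exact lp.norm_sub_eq_two_of_mem_convexHull_single
      (Disjoint.of_image_finset (hs i ▸ hs i' ▸ hpdisj i i' hii')) ha hb
  have : Nonempty (Fin r) := ⟨⟨0, by omega⟩⟩
  refine ⟨by simp only [hdiam, ciSup_const], hdist, fun c R hR => ?_⟩
  obtain ⟨a, ha, hac⟩ := hR ⟨0, by omega⟩
  obtain ⟨b, hb, hbc⟩ := hR ⟨1, by omega⟩
  have hab : dist a b = 2 := by
    rw [dist_eq_norm]
    exact hdist _ _ (by simp) a ha b hb
  linarith [dist_triangle_right a b c]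

/-- **Ivanov's lower-bound example in `ℓ₁`.** In the real Banach space
`ℓ₁ = lp (fun _ : ℕ => ℝ) 1` of absolutely summable sequences, with `e_j` the `j`-th
standard basis vector, let `Q i = {e_{i·k}, …, e_{i·k + (k-1)}}` for `i ∈ Fin r`
(`k ≥ 2`, `r ≥ 2`). Then `max_j diam Q_j = 2`, and for any transversal partition
`{P_1, …, P_k}` of `Q_1 ∪ ⋯ ∪ Q_r` (with `|P_i ∩ Q_j| = 1` for all `i, j`), any two
points in convex hulls of distinct parts are at `ℓ₁`-distance exactly `2`;
consequently any closed ball meeting the convex hull of every part has radius at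
least `1`. -/
theorem ivanov_l1_example
    (k r : ℕ) (hk : 2 ≤ k) (hr : 2 ≤ r)
    (Q : Fin r → Finset (lp (fun _ : ℕ => ℝ) 1))
    (hQ : ∀ i : Fin r, Q i =
      Finset.image (fun t : Fin k => lp.single 1 (i.val * k + t.val) (1 : ℝ)) Finset.univ)
    (Pparts : Fin k → Finset (lp (fun _ : ℕ => ℝ) 1))
    (hpdisj : ∀ i i', i ≠ i' → Disjoint (Pparts i) (Pparts i'))
    (hunion : Finset.univ.biUnion Pparts = Finset.univ.biUnion Q)
    (htrans : ∀ i j, (Pparts i ∩ Q j).card = 1) :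
    (⨆ j, Metric.diam (↑(Q j) : Set (lp (fun _ : ℕ => ℝ) 1))) = 2 ∧
    (∀ i i', i ≠ i' →
      ∀ a ∈ convexHull ℝ (↑(Pparts i) : Set (lp (fun _ : ℕ => ℝ) 1)),
      ∀ b ∈ convexHull ℝ (↑(Pparts i') : Set (lp (fun _ : ℕ => ℝ) 1)),
        ‖a - b‖ = 2) ∧
    (∀ (c : lp (fun _ : ℕ => ℝ) 1) (R : ℝ),
      (∀ i, ∃ p ∈ convexHull ℝ (↑(Pparts i) : Set (lp (fun _ : ℕ => ℝ) 1)),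
        dist p c ≤ R) → 1 ≤ R) :=
  ivanov_l1_example_general k r hk hr Q hQ Pparts hpdisj hunion
end

section
/- Work in the real Banach space ℓ∞ of bounded real sequences with the supremum norm. Let k ≥ 2 and r ≥ 2 be integers and let Q_1, …, Q_r be pairwise disjoint sets in ℓ∞, each of size k, and let D = diam(Q_1, …, Q_r) be the maximum distance between points of distinct sets. Then there exist a partition {P_1, …, P_k} of the union Q_1 ∪ ⋯ ∪ Q_r with |P_i ∩ Q_j| = 1 for all i ∈ {1,…,k}, j ∈ {1,…,r}, and a point c ∈ ℓ∞ such that for every i the closed ball of radius D/2 centered at c intersects the convex hull of P_i. -/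
open scoped Classical ENNReal

private abbrev Einf : Type := lp (fun _ : ℕ => ℝ) ∞

/-- **Second colorful no-dimensional Tverberg theorem in `ℓ∞`**
(Barabanshchikova, Polyanskii). In the real Banach space
`ℓ∞ = lp (fun _ : ℕ => ℝ) ∞` of bounded sequences with the supremum norm, let
`Q_1, …, Q_r` (`r ≥ 2`) be pairwise disjoint sets, each of size `k ≥ 2`, and let
`D = diam(Q_1, …, Q_r)` be the maximum distance between points of distinct sets.
Then there exist a transversal partition `{P_1, …, P_k}` of the union (with
`|P_i ∩ Q_j| = 1` for all `i, j`) and a point `c` such that the closed ball of radius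
`D/2` centered at `c` intersects the convex hull of every part. -/
theorem second_colorful_tverberg_linfty
    (k r : ℕ) (hk : 2 ≤ k) (hr : 2 ≤ r)
    (Q : Fin r → Finset (lp (fun _ : ℕ => ℝ) ∞))
    (hcard : ∀ j, (Q j).card = k)
    (hdisj : ∀ j j', j ≠ j' → Disjoint (Q j) (Q j'))
    (D : ℝ)
    (hD : D = sSup {d : ℝ | ∃ i j, i ≠ j ∧ ∃ x ∈ Q i, ∃ y ∈ Q j, d = dist x y}) :
    ∃ Pparts : Fin k → Finset (lp (fun _ : ℕ => ℝ) ∞),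
      (∀ i i', i ≠ i' → Disjoint (Pparts i) (Pparts i')) ∧
      Finset.univ.biUnion Pparts = Finset.univ.biUnion Q ∧
      (∀ i j, (Pparts i ∩ Q j).card = 1) ∧
      ∃ c : lp (fun _ : ℕ => ℝ) ∞,
        ∀ i, ∃ p ∈ convexHull ℝ (↑(Pparts i) : Set (lp (fun _ : ℕ => ℝ) ∞)),
          dist p c ≤ D / 2 := by
  -- transversal maps
  have hcard' : ∀ j, Fintype.card (Q j : Finset Einf) = k := fun j =>
    (Fintype.card_coe _).trans (hcard j)
  let e : Fin r → Fin k → Einf := fun j i =>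
    ((Fintype.equivFinOfCardEq (hcard' j)).symm i : Einf)
  have he_mem : ∀ j i, e j i ∈ Q j := fun j i =>
    ((Fintype.equivFinOfCardEq (hcard' j)).symm i).2
  have he_inj : ∀ j, Function.Injective (e j) := by
    intro j i i' h
    exact (Fintype.equivFinOfCardEq (hcard' j)).symm.injective (Subtype.ext h)
  have he_surj : ∀ j, ∀ x ∈ Q j, ∃ i, e j i = x := by
    intro j x hx
    exact ⟨(Fintype.equivFinOfCardEq (hcard' j)) ⟨x, hx⟩, by simp [e]⟩
  -- key: colors are determined
  have hkey : ∀ {j j' i i'}, e j i = e j' i' → j = j' := by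
    intro j j' i i' h
    by_contra hjj
    exact (Finset.disjoint_left.1 (hdisj j j' hjj)) (he_mem j i) (h ▸ he_mem j' i')
  let Pparts : Fin k → Finset Einf := fun i => Finset.univ.image (fun j => e j i)
  have hmemP : ∀ i x, x ∈ Pparts i ↔ ∃ j, e j i = x := by
    intro i x; simp [Pparts]
  refine ⟨Pparts, ?_, ?_, ?_, ?_⟩
  · intro i i' hii
    rw [Finset.disjoint_left]
    intro x hx hx'
    obtain ⟨j, hj⟩ := (hmemP i x).1 hx
    obtain ⟨j', hj'⟩ := (hmemP i' x).1 hx'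
    have hjj : j = j' := hkey (hj.trans hj'.symm)
    subst hjj
    exact hii (he_inj j (hj.trans hj'.symm))
  · ext x
    simp only [Finset.mem_biUnion, Finset.mem_univ, true_and]
    constructor
    · rintro ⟨i, hi⟩
      obtain ⟨j, hj⟩ := (hmemP i x).1 hi
      exact ⟨j, hj ▸ he_mem j i⟩
    · rintro ⟨j, hj⟩
      obtain ⟨i, hi⟩ := he_surj j x hj
      exact ⟨i, (hmemP i x).2 ⟨j, hi⟩⟩
  · intro i j
    have : Pparts i ∩ Q j = {e j i} := by
      ext x
      simp only [Finset.mem_inter, Finset.mem_singleton]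
      constructor
      · rintro ⟨hx, hxQ⟩
        obtain ⟨j', hj'⟩ := (hmemP i x).1 hx
        have : j' = j := by
          by_contra hne
          exact (Finset.disjoint_left.1 (hdisj j' j hne)) (hj' ▸ he_mem j' i) hxQ
        exact this ▸ hj'.symm
      · rintro rfl
        exact ⟨(hmemP i _).2 ⟨j, rfl⟩, he_mem j i⟩
    rw [this, Finset.card_singleton]
  -- analytic part
  · have hrange_fin : ({d : ℝ | ∃ i j, i ≠ j ∧ ∃ x ∈ Q i, ∃ y ∈ Q j, d = dist x y}).Finite := by
      have : {d : ℝ | ∃ i j, i ≠ j ∧ ∃ x ∈ Q i, ∃ y ∈ Q j, d = dist x y} ⊆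
          (fun p : Einf × Einf => dist p.1 p.2) ''
            ((↑(Finset.univ.biUnion Q) : Set Einf) ×ˢ (↑(Finset.univ.biUnion Q) : Set Einf)) := by
        rintro d ⟨i, j, hij, x, hx, y, hy, rfl⟩
        exact ⟨(x, y), ⟨by simp [Finset.mem_biUnion]; exact ⟨i, hx⟩,
          by simp [Finset.mem_biUnion]; exact ⟨j, hy⟩⟩, rfl⟩
      exact Set.Finite.subset (Set.Finite.image _ (Set.Finite.prod
        (Finset.univ.biUnion Q).finite_toSet (Finset.univ.biUnion Q).finite_toSet)) this
    have hDle : ∀ {j j'}, j ≠ j' → ∀ {x y : Einf}, x ∈ Q j → y ∈ Q j' → dist x y ≤ D := by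
      intro j j' hjj x y hx hy
      rw [hD]
      exact le_csSup hrange_fin.bddAbove ⟨j, j', hjj, x, hx, y, hy, rfl⟩
    have hj01 : (⟨0, by omega⟩ : Fin r) ≠ ⟨1, by omega⟩ := by
      intro h; simpa using congrArg Fin.val h
    set j0 : Fin r := ⟨0, by omega⟩
    set j1 : Fin r := ⟨1, by omega⟩
    set i0 : Fin k := ⟨0, by omega⟩
    have hD0 : 0 ≤ D :=
      le_trans dist_nonneg (hDle hj01 (he_mem j0 i0) (he_mem j1 i0))
    -- midpoints
    set m : Fin k → Einf := fun i => midpoint ℝ (e j0 i) (e j1 i) with hm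
    have hmm : ∀ i i', dist (m i) (m i') ≤ D := by
      intro i i'
      have h1 : dist (e j0 i) (e j1 i') ≤ D := hDle hj01 (he_mem j0 i) (he_mem j1 i')
      have h2 : dist (e j1 i) (e j0 i') ≤ D := hDle hj01.symm (he_mem j1 i) (he_mem j0 i')
      have h3 : dist (m i) (m i') ≤
          (dist (e j0 i) (e j1 i') + dist (e j1 i) (e j0 i')) / 2 := by
        have h := dist_midpoint_midpoint_le (e j0 i) (e j1 i) (e j1 i') (e j0 i')
        rwa [midpoint_comm (e j1 i') (e j0 i')] at h
      linarith
    -- coordinatewise bounds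
    have hcoord : ∀ i i' n, |(m i : ℕ → ℝ) n - (m i' : ℕ → ℝ) n| ≤ D := by
      intro i i' n
      have h1 : ‖(m i - m i' : Einf) n‖ ≤ ‖m i - m i'‖ :=
        lp.norm_apply_le_norm (by norm_num) _ n
      have h2 : (m i - m i' : Einf) n = (m i : ℕ → ℝ) n - (m i' : ℕ → ℝ) n := by
        simp
      rw [h2, Real.norm_eq_abs] at h1
      exact h1.trans (by rw [← dist_eq_norm]; exact hmm i i')
    haveI : Nonempty (Fin k) := ⟨i0⟩
    set s : ℕ → ℝ := fun n => Finset.univ.sup' Finset.univ_nonempty (fun i => (m i : ℕ → ℝ) n)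
    set t : ℕ → ℝ := fun n => Finset.univ.inf' Finset.univ_nonempty (fun i => (m i : ℕ → ℝ) n)
    have hts : ∀ n, s n - t n ≤ D := by
      intro n
      have : s n ≤ t n + D := by
        apply Finset.sup'_le
        intro i _
        have : (m i : ℕ → ℝ) n - D ≤ t n := by
          apply Finset.le_inf'
          intro i' _
          have := hcoord i i' n
          rw [abs_le] at this
          linarith [this.1]
        linarith
      linarith
    set F : ℕ → ℝ := fun n => (s n + t n) / 2 with hF
    have hbound : ∀ i n, |(m i : ℕ → ℝ) n - F n| ≤ D / 2 := by
      intro i n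
      have h1 : (m i : ℕ → ℝ) n ≤ s n :=
        Finset.le_sup' (fun i => (m i : ℕ → ℝ) n) (Finset.mem_univ i)
      have h2 : t n ≤ (m i : ℕ → ℝ) n :=
        Finset.inf'_le (fun i => (m i : ℕ → ℝ) n) (Finset.mem_univ i)
      have h3 := hts n
      rw [abs_le]
      constructor <;> simp only [hF] <;> nlinarith
    have hmemF : Memℓp F ∞ := by
      apply memℓp_infty
      refine ⟨‖m i0‖ + D / 2, ?_⟩
      rintro x ⟨n, rfl⟩
      have h1 := hbound i0 n
      have h2 : ‖(m i0 : ℕ → ℝ) n‖ ≤ ‖m i0‖ := lp.norm_apply_le_norm (by norm_num) _ n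
      show ‖F n‖ ≤ ‖m i0‖ + D / 2
      rw [Real.norm_eq_abs] at h2
      rw [Real.norm_eq_abs]
      have := abs_sub_abs_le_abs_sub (F n) ((m i0 : ℕ → ℝ) n)
      rw [abs_sub_comm] at this
      linarith
    set c : Einf := ⟨F, hmemF⟩ with hc
    refine ⟨c, fun i => ⟨m i, ?_, ?_⟩⟩
    · have ha : e j0 i ∈ (↑(Pparts i) : Set Einf) := by
        simpa using (hmemP i (e j0 i)).2 ⟨j0, rfl⟩
      have hb : e j1 i ∈ (↑(Pparts i) : Set Einf) := by
        simpa using (hmemP i (e j1 i)).2 ⟨j1, rfl⟩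
      exact segment_subset_convexHull ha hb (midpoint_mem_segment _ _)
    · rw [dist_eq_norm]
      apply lp.norm_le_of_forall_le' (D / 2)
      intro n
      have h2 : (m i - c : Einf) n = (m i : ℕ → ℝ) n - F n := by
        simp only [hc, lp.coeFn_sub, Pi.sub_apply]
      rw [h2, Real.norm_eq_abs]
      exact hbound i n
end

section
/- For any integers k ≥ 1 and d ≥ 1 and any set of (k−1)(d+1)+1 points in ℝ^d, there is a partition of the set into k nonempty subsets P_1, …, P_k such that the convex hulls of P_1, …, P_k have a common point. -/
open scoped Classical

/-!
Sarkaria's reduction of Tverberg's theorem to Bárány's colorful Carathéodory theorem. Let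
`v₀, …, v_K ∈ ℝᴷ` be vectors whose only linear relations are the multiples of `∑ v_j = 0`. For
each point `a i`, the `K + 1` vectors `v_j ⊗ (a i, 1)` of `(E × ℝ)ᴷ` sum to zero, so each such
color class surrounds the origin, and there are more colors than `K (dim E + 1)`. A colorful
choice `j = c i` with weights `μ` and `∑ μ i • v_{c i} ⊗ (a i, 1) = 0` forces the sums
`∑_{c i = j} μ i • (a i, 1)` to be independent of `j`; their last coordinates are then equal and
positive, and the normalized first coordinates are a common point of the hulls of the parts.
-/

open scoped RealInnerProductSpace
open Finset Module Set

section Convexity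

variable {E : Type*} [AddCommGroup E] [Module ℝ E]

theorem exists_weights_of_mem_convexHull_range {ι : Type*} [Fintype ι] {v : ι → E} {x : E}
    (hx : x ∈ convexHull ℝ (range v)) :
    ∃ w : ι → ℝ, (∀ i, 0 ≤ w i) ∧ ∑ i, w i = 1 ∧ ∑ i, w i • v i = x := by
  have hv : range v = Fintype.linearCombination ℝ v ''
      range fun i j : ι => if i = j then (1 : ℝ) else 0 := by
    rw [← range_comp]
    congr 1
    ext i
    simp [Fintype.linearCombination_apply, ite_smul]
  rw [hv, ← LinearMap.image_convexHull, convexHull_basis_eq_stdSimplex] at hx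
  obtain ⟨w, ⟨hw₀, hw₁⟩, rfl⟩ := hx
  exact ⟨w, hw₀, hw₁, rfl⟩

theorem zero_mem_convexHull_range_of_sum_eq_zero {κ : Type*} [Fintype κ] [Nonempty κ]
    {v : κ → E} (hv : ∑ j, v j = 0) : (0 : E) ∈ convexHull ℝ (range v) :=
  mem_convexHull_of_exists_fintype (fun _ => (Fintype.card κ : ℝ)⁻¹) v (fun _ => by positivity)
    (by simp) (fun j => mem_range_self j) (by rw [← smul_sum, hv, smul_zero])

theorem AffineIndependent.linearIndependent_of_apply_eq {k V ι : Type*} [Field k]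
    [AddCommGroup V] [Module k V] {z : ι → V} (hz : AffineIndependent k z) (f : V →ₗ[k] k)
    {r : k} (hr : r ≠ 0) (hf : ∀ i, f (z i) = r) : LinearIndependent k z := by
  rw [linearIndependent_iff']
  intro s g hg
  refine hz.eq_zero_of_sum_eq_zero ?_ hg
  have := congrArg f hg
  simp only [map_sum, map_smul, hf, smul_eq_mul, ← Finset.sum_mul, map_zero] at this
  exact (mul_eq_zero.1 this).resolve_right hr

end Convexity

section InnerProductSpace

variable {E : Type*} [NormedAddCommGroup E] [InnerProductSpace ℝ E]

theorem exists_inner_nonpos_of_zero_mem_convexHull {s : Set E} (hs : (0 : E) ∈ convexHull ℝ s)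
    (p : E) : ∃ y ∈ s, ⟪p, y⟫ ≤ 0 := by
  by_contra! h
  have hsub : convexHull ℝ s ⊆ {y | 0 < ⟪p, y⟫} :=
    convexHull_min h (convex_halfSpace_gt (innerₛₗ ℝ p).isLinear 0)
  simpa using hsub hs

theorem Convex.norm_sq_le_inner_of_isMinOn {K : Set E} (hK : Convex ℝ K) {p : E} (hp : p ∈ K)
    (hmin : IsMinOn (‖·‖) K p) {w : E} (hw : w ∈ K) : ‖p‖ ^ 2 ≤ ⟪p, w⟫ := by
  have hinf : ‖0 - p‖ = ⨅ w : K, ‖0 - (w : E)‖ := by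
    have : Nonempty K := ⟨⟨p, hp⟩⟩
    have hbdd : BddBelow (range fun w : K => ‖0 - (w : E)‖) :=
      ⟨0, by rintro _ ⟨w, rfl⟩; exact norm_nonneg _⟩
    exact le_antisymm (le_ciInf fun w => by simpa using hmin w.2) (ciInf_le hbdd ⟨p, hp⟩)
  have := (norm_eq_iInf_iff_real_inner_le_zero hK hp).1 hinf w hw
  rw [zero_sub, inner_neg_left, inner_sub_right, real_inner_self_eq_norm_sq] at this
  linarith

variable [FiniteDimensional ℝ E]

/-- The points of a Carathéodory representation of `p` lie on the supporting hyperplane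
`⟪p, ·⟫ = ‖p‖²`, which misses the origin, so they are linearly independent. -/
theorem exists_card_le_finrank_of_isMinOn_convexHull {s : Set E} {p : E} (hp₀ : p ≠ 0)
    (hp : p ∈ convexHull ℝ s) (hmin : IsMinOn (‖·‖) (convexHull ℝ s) p) :
    ∃ t : Finset E, (t : Set E) ⊆ s ∧ #t ≤ finrank ℝ E ∧ p ∈ convexHull ℝ (t : Set E) := by
  obtain ⟨κ, _, z, w, hzs, hz, hw₀, hw₁, hwz⟩ := eq_pos_convex_span_of_mem_convexHull hp
  have hge : ∀ j, ‖p‖ ^ 2 ≤ ⟪p, z j⟫ := fun j =>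
    (convex_convexHull ℝ s).norm_sq_le_inner_of_isMinOn hp hmin
      (subset_convexHull ℝ s (hzs (mem_range_self j)))
  have hface : ∀ j, ⟪p, z j⟫ = ‖p‖ ^ 2 := by
    have hsum : ∑ j, w j * (⟪p, z j⟫ - ‖p‖ ^ 2) = 0 := by
      simp only [mul_sub, Finset.sum_sub_distrib, ← Finset.sum_mul, hw₁, one_mul,
        ← real_inner_smul_right, ← inner_sum, hwz, real_inner_self_eq_norm_sq, sub_self]
    intro j
    have := (Finset.sum_eq_zero_iff_of_nonneg fun j _ =>
      mul_nonneg (hw₀ j).le (sub_nonneg.2 (hge j))).1 hsum j (mem_univ j)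
    linarith [(mul_eq_zero.1 this).resolve_left (hw₀ j).ne']
  have hind := hz.linearIndependent_of_apply_eq (innerₛₗ ℝ p) (by positivity) hface
  refine ⟨univ.image z, by simpa using hzs, card_image_le.trans hind.fintype_card_le_finrank, ?_⟩
  exact mem_convexHull_of_exists_fintype w z (fun j => (hw₀ j).le) hw₁ (by simp) hwz

end InnerProductSpace

/-- Bárány's argument: let `p` be a point of least norm on all colorful hulls, say on the hull of
the selection `x₀`. If `p ≠ 0`, it lies in the hull of at most `finrank ℝ E` points of `x₀`, so
some color `i₀` is not needed; replacing the point of color `i₀` by a point `y ∈ S i₀` with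
`⟪p, y⟫ ≤ 0` keeps `p` in the hull, and minimality of `p` on the new hull forces `‖p‖² ≤ ⟪p, y⟫`. -/
theorem colorful_caratheodory_of_innerProductSpace {E : Type*} [NormedAddCommGroup E]
    [InnerProductSpace ℝ E] [FiniteDimensional ℝ E] {ι : Type*} [Fintype ι]
    (hcard : finrank ℝ E < Fintype.card ι) (S : ι → Set E) (hfin : ∀ i, (S i).Finite)
    (hS : ∀ i, (0 : E) ∈ convexHull ℝ (S i)) :
    ∃ x : ι → E, (∀ i, x i ∈ S i) ∧ (0 : E) ∈ convexHull ℝ (range x) := by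
  have : Nonempty ι := Fintype.card_pos_iff.1 (by omega)
  have (i : ι) : Finite (S i) := (hfin i).to_subtype
  have (i : ι) : Nonempty (S i) := (convexHull_nonempty_iff.1 ⟨0, hS i⟩).to_subtype
  let hull (x : ∀ i, S i) : Set E := convexHull ℝ (range fun i => (x i : E))
  have hcompact : IsCompact (⋃ x, hull x) :=
    isCompact_iUnion fun x => (finite_range _).isCompact_convexHull (𝕜 := ℝ)
  have hne : (⋃ x, hull x).Nonempty :=
    nonempty_iUnion.2 ⟨Classical.arbitrary _, (range_nonempty _).convexHull⟩
  obtain ⟨p, hpU, hpmin⟩ := hcompact.exists_isMinOn hne continuous_norm.continuousOn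
  obtain ⟨x₀, hpx₀⟩ := mem_iUnion.1 hpU
  have hmin (x : ∀ i, S i) : IsMinOn (‖·‖) (hull x) p := hpmin.on_subset (subset_iUnion hull x)
  by_cases hp₀ : p = 0
  · exact ⟨fun i => x₀ i, fun i => (x₀ i).2, hp₀ ▸ hpx₀⟩
  obtain ⟨t, hts, htcard, hpt⟩ := exists_card_le_finrank_of_isMinOn_convexHull hp₀ hpx₀ (hmin x₀)
  choose σ hσ using fun y : t => hts y.2
  obtain ⟨i₀, hi₀⟩ : ∃ i₀, ∀ y, σ y ≠ i₀ := by
    by_contra! h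
    have := Fintype.card_le_of_surjective σ h
    simp only [Fintype.card_coe] at this
    omega
  obtain ⟨y, hyS, hy⟩ := exists_inner_nonpos_of_zero_mem_convexHull (hS i₀) p
  let x' := Function.update x₀ i₀ ⟨y, hyS⟩
  have hpx' : p ∈ hull x' := by
    show p ∈ convexHull ℝ (range fun i => (x' i : E))
    refine convexHull_mono (fun z hz => mem_range.2 ⟨σ ⟨z, hz⟩, ?_⟩) hpt
    simp [x', Function.update_of_ne (hi₀ _), hσ]
  have hyx' : y ∈ hull x' := subset_convexHull ℝ _ ⟨i₀, by simp [x']⟩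
  have := (convex_convexHull ℝ _).norm_sq_le_inner_of_isMinOn hpx' (hmin x') hyx'
  have : 0 < ‖p‖ ^ 2 := by positivity
  linarith

theorem colorful_caratheodory {E : Type*} [AddCommGroup E] [Module ℝ E] [FiniteDimensional ℝ E]
    {ι : Type*} [Fintype ι] (hcard : finrank ℝ E < Fintype.card ι) (S : ι → Set E)
    (hfin : ∀ i, (S i).Finite) (hS : ∀ i, (0 : E) ∈ convexHull ℝ (S i)) :
    ∃ x : ι → E, (∀ i, x i ∈ S i) ∧ (0 : E) ∈ convexHull ℝ (range x) := by
  let e : E ≃ₗ[ℝ] EuclideanSpace ℝ (Fin (finrank ℝ E)) := LinearEquiv.ofFinrankEq _ _ (by simp)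
  have himage (s : Set E) : convexHull ℝ (e '' s) = e '' convexHull ℝ s :=
    (e.toLinearMap.image_convexHull s).symm
  obtain ⟨x, hxS, hx₀⟩ := colorful_caratheodory_of_innerProductSpace (S := fun i => e '' S i)
    (by simpa using hcard) (fun i => (hfin i).image e)
    (fun i => by rw [himage]; exact ⟨0, hS i, map_zero e⟩)
  refine ⟨fun i => e.symm (x i), fun i => ?_, ?_⟩
  · obtain ⟨y, hy, hyx⟩ := hxS i
    simpa [← hyx] using hy
  · have : range x = e '' range fun i => e.symm (x i) := by
      rw [← range_comp]; simp [Function.comp_def]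
    rw [this, himage] at hx₀
    obtain ⟨z, hz, hz₀⟩ := hx₀
    rwa [(map_eq_zero_iff e e.injective).1 hz₀] at hz

section Sarkaria

variable {K : ℕ}

/-- The vectors `e₀, …, e_{K-1}, -(e₀ + ⋯ + e_{K-1})` of `ℝᴷ`: up to scaling, their only linear
relation is that they sum to zero. -/
def sarkariaVector (j : Fin (K + 1)) (t : Fin K) : ℝ :=
  (if j = t.castSucc then 1 else 0) - if j = Fin.last K then 1 else 0

theorem sum_sarkariaVector_smul {M : Type*} [AddCommGroup M] [Module ℝ M] (Q : Fin (K + 1) → M)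
    (t : Fin K) : ∑ j, sarkariaVector j t • Q j = Q t.castSucc - Q (Fin.last K) := by
  simp [sarkariaVector, sub_smul, ite_smul, Finset.sum_sub_distrib]

theorem eq_last_of_sum_sarkariaVector_smul_eq_zero {M : Type*} [AddCommGroup M] [Module ℝ M]
    {Q : Fin (K + 1) → M} (hQ : ∀ t, ∑ j, sarkariaVector j t • Q j = 0) (j : Fin (K + 1)) :
    Q j = Q (Fin.last K) := by
  induction j using Fin.lastCases with
  | last => rfl
  | cast t => rw [← sub_eq_zero, ← sum_sarkariaVector_smul, hQ]

theorem exists_tverberg_coloring {E : Type*} [AddCommGroup E] [Module ℝ E]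
    [FiniteDimensional ℝ E] {ι : Type*} [Fintype ι] (a : ι → E)
    (hcard : K * (finrank ℝ E + 1) < Fintype.card ι) :
    ∃ c : ι → Fin (K + 1), Function.Surjective c ∧
      ∃ x : E, ∀ j, x ∈ convexHull ℝ (a '' {i | c i = j}) := by
  let T (i : ι) (j : Fin (K + 1)) : Fin K → E × ℝ := fun t => sarkariaVector j t • (a i, 1)
  have hT (i : ι) : (0 : Fin K → E × ℝ) ∈ convexHull ℝ (range (T i)) := by
    refine zero_mem_convexHull_range_of_sum_eq_zero (funext fun t => ?_)
    simpa [T] using sum_sarkariaVector_smul (fun _ => (a i, (1 : ℝ))) t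
  have hdim : finrank ℝ (Fin K → E × ℝ) < Fintype.card ι := by
    simpa [Module.finrank_pi_fintype, Module.finrank_prod] using hcard
  obtain ⟨x, hxT, hx₀⟩ := colorful_caratheodory hdim (fun i => range (T i))
    (fun i => finite_range _) hT
  choose c hc using hxT
  obtain ⟨μ, hμ₀, hμ₁, hμ⟩ := exists_weights_of_mem_convexHull_range hx₀
  let Q (j : Fin (K + 1)) : E × ℝ := ∑ i with c i = j, μ i • (a i, 1)
  have hQ : ∀ j, Q j = Q (Fin.last K) := eq_last_of_sum_sarkariaVector_smul_eq_zero fun t => by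
    calc ∑ j, sarkariaVector j t • Q j = ∑ j, ∑ i with c i = j, μ i • T i (c i) t := by
          refine sum_congr rfl fun j _ => ?_
          rw [smul_sum]
          refine sum_congr rfl fun i hi => ?_
          rw [(mem_filter.1 hi).2, smul_comm]
      _ = (∑ i, μ i • x i) t := by simp only [sum_fiberwise, hc, Finset.sum_apply, Pi.smul_apply]
      _ = 0 := by rw [hμ]; rfl
  have hW (j : Fin (K + 1)) : (Q j).2 = ∑ i with c i = j, μ i := by simp [Q, Prod.snd_sum]
  have hpos : 0 < (Q (Fin.last K)).2 := by
    refine (hW _ ▸ sum_nonneg fun i _ => hμ₀ i).lt_of_ne fun h => ?_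
    have : ∑ j, (Q j).2 = 1 := by simp only [hW, sum_fiberwise, hμ₁]
    simp [hQ, ← h] at this
  refine ⟨c, fun j => ?_, (Q (Fin.last K)).2⁻¹ • (Q (Fin.last K)).1, fun j => ?_⟩
  · obtain ⟨i, hi, -⟩ := exists_ne_zero_of_sum_ne_zero (hW j ▸ hQ j ▸ hpos.ne')
    exact ⟨i, (mem_filter.1 hi).2⟩
  · have hcm : (univ.filter (c · = j)).centerMass μ a = (Q j).2⁻¹ • (Q j).1 := by
      simp [Finset.centerMass, Q, Prod.fst_sum, Prod.snd_sum]
    rw [← hQ j, ← hcm]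
    exact centerMass_mem_convexHull _ (fun i _ => hμ₀ i) (hW j ▸ hQ j ▸ hpos)
      fun i hi => mem_image_of_mem a (mem_filter.1 hi).2

end Sarkaria

theorem tverberg_theorem_general
    (k d : ℕ) (hk : 1 ≤ k)
    (P : Finset (EuclideanSpace ℝ (Fin d)))
    (hP : P.card = (k - 1) * (d + 1) + 1) :
    ∃ Pparts : Fin k → Finset (EuclideanSpace ℝ (Fin d)),
      (∀ i, (Pparts i).Nonempty) ∧
      (∀ i i', i ≠ i' → Disjoint (Pparts i) (Pparts i')) ∧
      Finset.univ.biUnion Pparts = P ∧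
      ∃ c : EuclideanSpace ℝ (Fin d),
        ∀ i, c ∈ convexHull ℝ (↑(Pparts i) : Set (EuclideanSpace ℝ (Fin d))) := by
  obtain ⟨K, rfl⟩ : ∃ K, k = K + 1 := ⟨k - 1, by omega⟩
  obtain ⟨c, hc, x, hx⟩ := exists_tverberg_coloring (K := K) ((↑) : P → EuclideanSpace ℝ (Fin d))
    (by simp [hP])
  let color : EuclideanSpace ℝ (Fin d) → Fin (K + 1) := Function.extend (↑) c 0
  have hcolor (i : P) : color i = c i := Subtype.val_injective.extend_apply c 0 i
  refine ⟨fun j => P.filter (color · = j), fun j => ?_, fun j j' hjj' => ?_, ?_, x, fun j => ?_⟩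
  · obtain ⟨i, rfl⟩ := hc j
    exact ⟨i, mem_filter.2 ⟨i.2, hcolor i⟩⟩
  · exact disjoint_filter.2 fun _ _ h h' => hjj' (h ▸ h')
  · exact biUnion_filter_eq_of_maps_to fun _ _ => mem_univ _
  · convert hx j using 2
    ext y
    simp only [coe_filter, mem_image, mem_ofPred_eq, Subtype.exists, exists_and_right,
      exists_eq_right]
    exact ⟨fun h => ⟨h.1, hcolor ⟨y, h.1⟩ ▸ h.2⟩, fun ⟨hy, h⟩ => ⟨hy, hcolor ⟨y, hy⟩ ▸ h⟩⟩

/-- **Tverberg's theorem.** For any integers `k ≥ 1`, `d ≥ 1` and any set of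
`(k−1)(d+1)+1` points in `ℝ^d`, there is a partition of the set into `k` nonempty
subsets whose convex hulls have a common point. -/
theorem tverberg_theorem
    (k d : ℕ) (hk : 1 ≤ k) (hd : 1 ≤ d)
    (P : Finset (EuclideanSpace ℝ (Fin d)))
    (hP : P.card = (k - 1) * (d + 1) + 1) :
    ∃ Pparts : Fin k → Finset (EuclideanSpace ℝ (Fin d)),
      (∀ i, (Pparts i).Nonempty) ∧
      (∀ i i', i ≠ i' → Disjoint (Pparts i) (Pparts i')) ∧
      Finset.univ.biUnion Pparts = P ∧
      ∃ c : EuclideanSpace ℝ (Fin d),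
        ∀ i, c ∈ convexHull ℝ (↑(Pparts i) : Set (EuclideanSpace ℝ (Fin d))) :=
  tverberg_theorem_general k d hk P hP
end
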